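/- arXiv:1703.10573 — 9 statements merged into one kernel-verified Lean document; each statement's English description precedes it below -/
import Mathlib

section
/- For every connected graph $G$ on $n \geq 1$ vertices and every $k \in \{1,\dots,n\}$, the number of vertex subsets of size $k$ that induce a connected subgraph is at least $n-k+1$. -/
open Finset
open scoped Classical

/-- The node reliability polynomial of a graph `G`: the probability that the set of
operational nodes is nonempty and induces a connected subgraph, when each node
operates independently with probability `p`. -/
noncomputable def nRel {V : Type*} [Fintype V] (G : SimpleGraph V) (p : ℝ) : ℝ :=
  ∑ s : Finset V, if (G.induce (s : Set V)).Connected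
    then p ^ s.card * (1 - p) ^ (Fintype.card V - s.card) else 0

/-- `cCount G k` is the number of `k`-element vertex subsets of `G` inducing a
connected subgraph (note: `SimpleGraph.Connected` requires nonemptiness). -/
noncomputable def cCount {V : Type*} [Fintype V] (G : SimpleGraph V) (k : ℕ) : ℕ :=
  ((Finset.univ : Finset (Finset V)).filter
    (fun s : Finset V => s.card = k ∧ (G.induce (s : Set V)).Connected)).card

/-! Grow a connected set one vertex at a time, always along an edge leaving it, from size `k`
up to all of `V`. Each new vertex `y` lies in some connected `k`-subset of the enlarged set
(grown from `y` in the same way), and that subset is new because it contains `y`. So each of the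
`n - k` steps adds a connected `k`-set to the at least one present at the start. -/

namespace SimpleGraph

variable {V : Type*} {G : SimpleGraph V}

lemma Connected.induce_insert_of_adj {s : Set V} (hs : (G.induce s).Connected) {x y : V}
    (hx : x ∈ s) (hxy : G.Adj x y) : (G.induce (insert y s)).Connected := by
  rw [Set.insert_eq]
  exact connected_induce_union .of_subsingleton hs.preconnected rfl hx hxy.symm

lemma Connected.induce_univ (hG : G.Connected) : (G.induce Set.univ).Connected :=
  (induceUnivIso G).connected_iff.mpr hG

lemma Connected.exists_induce_insert_connected_of_ssubset {s u : Set V}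
    (hs : (G.induce s).Connected) (hu : (G.induce u).Connected) (hsu : s ⊂ u) :
    ∃ y ∈ u, y ∉ s ∧ (G.induce (insert y s)).Connected := by
  obtain ⟨⟨v, hv⟩⟩ := hs.nonempty
  obtain ⟨w, hwu, hws⟩ := Set.exists_of_ssubset hsu
  obtain ⟨p⟩ := hu.preconnected ⟨v, hsu.subset hv⟩ ⟨w, hwu⟩
  obtain ⟨d, -, hd₁, hd₂⟩ := p.exists_boundary_dart {z : u | (z : V) ∈ s} hv hws
  exact ⟨d.snd, d.snd.2, hd₂, hs.induce_insert_of_adj hd₁ d.adj⟩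

lemma Connected.exists_connected_subset_card_eq {u : Finset V}
    (hu : (G.induce (u : Set V)).Connected) {v : V} (hv : v ∈ u) {k : ℕ} (hk : 1 ≤ k)
    (hku : k ≤ u.card) :
    ∃ t ⊆ u, v ∈ t ∧ t.card = k ∧ (G.induce (t : Set V)).Connected := by
  induction k, hk using Nat.le_induction with
  | base =>
    refine ⟨{v}, by simpa using hv, mem_singleton_self v, card_singleton v, ?_⟩
    rw [coe_singleton]
    exact ⟨.of_subsingleton⟩
  | succ k _ ih =>
    obtain ⟨t, htu, hvt, htk, ht⟩ := ih (by omega)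
    have htu' : (t : Set V) ⊂ u := by
      rw [coe_ssubset]
      exact ssubset_of_subset_of_ne htu (by rintro rfl; omega)
    obtain ⟨y, hyu, hyt, hy⟩ := ht.exists_induce_insert_connected_of_ssubset hu htu'
    rw [mem_coe] at hyu hyt
    refine ⟨insert y t, insert_subset hyu htu, mem_insert_of_mem hvt, ?_, by rwa [coe_insert]⟩
    rw [card_insert_of_notMem hyt, htk]

noncomputable def connectedSubsets (G : SimpleGraph V) (s : Finset V) (k : ℕ) :
    Finset (Finset V) :=
  s.powerset.filter fun t => t.card = k ∧ (G.induce (t : Set V)).Connected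

lemma card_connectedSubsets_lt_insert {s : Finset V} {y : V} (hys : y ∉ s)
    (hs : (G.induce (insert y s : Finset V)).Connected) {k : ℕ} (hk : 1 ≤ k)
    (hks : k ≤ s.card + 1) :
    (G.connectedSubsets s k).card < (G.connectedSubsets (insert y s) k).card := by
  apply card_lt_card
  have hsub : G.connectedSubsets s k ⊆ G.connectedSubsets (insert y s) k :=
    filter_subset_filter _ (powerset_mono.mpr (subset_insert y s))
  rw [ssubset_iff_of_subset hsub]
  obtain ⟨t, hts, hyt, htk, ht⟩ := hs.exists_connected_subset_card_eq (mem_insert_self y s) hk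
    (by rwa [card_insert_of_notMem hys])
  refine ⟨t, mem_filter.mpr ⟨mem_powerset.mpr hts, htk, ht⟩, fun htmem => hys ?_⟩
  exact mem_powerset.mp (mem_filter.mp htmem).1 hyt

lemma Connected.exists_card_eq_le_card_connectedSubsets [Fintype V] (hG : G.Connected)
    {k m : ℕ} (hk : 1 ≤ k) (hkm : k ≤ m) (hm : m ≤ Fintype.card V) :
    ∃ s : Finset V, s.card = m ∧ (G.induce (s : Set V)).Connected ∧
      m - k + 1 ≤ (G.connectedSubsets s k).card := by
  induction m, hkm using Nat.le_induction with
  | base =>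
    obtain ⟨v⟩ := hG.nonempty
    have huniv : (G.induce ((univ : Finset V) : Set V)).Connected := by
      rw [coe_univ]; exact hG.induce_univ
    obtain ⟨t, -, -, htk, ht⟩ :=
      huniv.exists_connected_subset_card_eq (mem_univ v) hk (by rwa [card_univ])
    have htt : t ∈ G.connectedSubsets t k := mem_filter.mpr ⟨mem_powerset_self t, htk, ht⟩
    exact ⟨t, htk, ht, by simpa using card_pos.mpr ⟨t, htt⟩⟩
  | succ m hkm ih =>
    obtain ⟨s, hsm, hs, hcount⟩ := ih (by omega)
    have hsuniv : (s : Set V) ⊂ Set.univ := by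
      rw [← coe_univ, coe_ssubset]
      exact ssubset_of_subset_of_ne (subset_univ s) (by rintro rfl; rw [card_univ] at hsm; omega)
    obtain ⟨y, -, hys, hy⟩ := hs.exists_induce_insert_connected_of_ssubset hG.induce_univ hsuniv
    rw [mem_coe] at hys
    rw [← coe_insert] at hy
    refine ⟨insert y s, by rw [card_insert_of_notMem hys, hsm], hy, ?_⟩
    have := card_connectedSubsets_lt_insert hys hy hk (by omega)
    omega

end SimpleGraph

theorem stmt0_general {V : Type*} [Fintype V] (G : SimpleGraph V) (hG : G.Connected)
    (n : ℕ) (hn : n = Fintype.card V)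
    (k : ℕ) (hk1 : 1 ≤ k) (hkn : k ≤ n) :
    n - k + 1 ≤ cCount G k := by
  obtain ⟨s, -, -, hs⟩ := hG.exists_card_eq_le_card_connectedSubsets hk1 hkn hn.le
  refine hs.trans (card_le_card fun t ht => ?_)
  obtain ⟨-, htk, ht⟩ := mem_filter.mp ht
  exact mem_filter.mpr ⟨mem_univ t, htk, ht⟩

theorem stmt0 {V : Type*} [Fintype V] (G : SimpleGraph V) (hG : G.Connected)
    (n : ℕ) (hn : n = Fintype.card V) (hn1 : 1 ≤ n)
    (k : ℕ) (hk1 : 1 ≤ k) (hkn : k ≤ n) :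
    n - k + 1 ≤ cCount G k :=
  stmt0_general G hG n hn k hk1 hkn
end

section
/- Let $G$ be a graph on $n$ vertices and let $c_k$ denote the number of connected sets of $G$ of cardinality $k$. Then for all $k \in \{2,\dots,n\}$ and $t \in \{1,\dots,k-1\}$, we have $(k-t+1)c_k \leq \binom{n-t}{k-t} c_t$. -/
/-!
Every connected `k`-set `S` contains at least `k - t + 1` connected `t`-subsets. Induct on `S`:
removing a non-cut vertex `u` (a leaf of a spanning tree) leaves a connected `(k - 1)`-set, and
growing `{u}` inside `S` one neighbour at a time yields a connected `t`-subset of `S` through `u`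
that the smaller set does not contain. Double counting the pairs `T ⊆ S` of connected `t`- and
`k`-sets then gives the bound, since a `t`-set lies in only `C(n - t, k - t)` sets of size `k`.
-/

open Finset
open scoped Classical

namespace SimpleGraph

variable {V : Type*} {G : SimpleGraph V}

theorem exists_connected_induce_erase {s : Finset V} (hs : (G.induce (s : Set V)).Connected)
    (hcard : 2 ≤ #s) : ∃ u ∈ s, (G.induce (↑(s.erase u) : Set V)).Connected := by
  have : Nontrivial (s : Set V) :=
    Set.nontrivial_coe_sort.mpr (Finset.one_lt_card_iff_nontrivial.mp hcard)
  obtain ⟨⟨u, hu⟩, hconn⟩ := hs.exists_connected_induce_compl_singleton_of_finite_nontrivial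
  refine ⟨u, hu, hconn.map (induceHom (Embedding.induce _).toHom ?_) ?_⟩
  · rintro ⟨x, hx⟩ hxu
    exact Finset.mem_erase.mpr ⟨by simpa [Subtype.ext_iff] using hxu, hx⟩
  · rintro ⟨y, hy⟩
    obtain ⟨hyu, hys⟩ := Finset.mem_erase.mp hy
    exact ⟨⟨⟨y, hys⟩, by simpa [Subtype.ext_iff] using hyu⟩, rfl⟩

theorem exists_connected_induce_insert {s t : Finset V} (hs : (G.induce (s : Set V)).Connected)
    (ht : (G.induce (t : Set V)).Connected) (hts : t ⊂ s) :
    ∃ b ∈ s \ t, (G.induce (↑(insert b t) : Set V)).Connected := by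
  obtain ⟨y, hys, hyt⟩ := Finset.exists_of_ssubset hts
  obtain ⟨⟨x, hxt⟩⟩ := ht.nonempty
  obtain ⟨p⟩ := hs.preconnected ⟨x, hts.subset hxt⟩ ⟨y, hys⟩
  obtain ⟨d, -, hd_fst, hd_snd⟩ := p.exists_boundary_dart {z | z.1 ∈ t} hxt hyt
  refine ⟨d.snd, Finset.mem_sdiff.mpr ⟨d.snd.2, hd_snd⟩, ?_⟩
  have hsingle : (G.induce ({d.snd.1} : Set V)).Preconnected := by
    rw [induce_singleton_eq_top]
    exact connected_top.preconnected
  rw [Finset.coe_insert, Set.insert_eq, Set.union_comm]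
  exact connected_induce_union ht.preconnected hsingle hd_fst rfl d.adj

theorem exists_connected_induce_subset_card {s : Finset V}
    (hs : (G.induce (s : Set V)).Connected) {u : V} (hu : u ∈ s) {m : ℕ} (hm : 1 ≤ m)
    (hms : m ≤ #s) : ∃ t ⊆ s, u ∈ t ∧ #t = m ∧ (G.induce (t : Set V)).Connected := by
  induction m, hm using Nat.le_induction with
  | base =>
    refine ⟨{u}, Finset.singleton_subset_iff.mpr hu, Finset.mem_singleton_self u, rfl, ?_⟩
    rw [Finset.coe_singleton, induce_singleton_eq_top]
    exact connected_top
  | succ m _ ih =>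
    obtain ⟨t, hts, hut, rfl, ht⟩ := ih (by omega)
    have hts' : t ⊂ s := Finset.ssubset_iff_subset_ne.mpr ⟨hts, by rintro rfl; omega⟩
    obtain ⟨b, hb, hconn⟩ := exists_connected_induce_insert hs ht hts'
    obtain ⟨hbs, hbt⟩ := Finset.mem_sdiff.mp hb
    exact ⟨insert b t, Finset.insert_subset hbs hts, Finset.mem_insert_of_mem hut,
      Finset.card_insert_of_notMem hbt, hconn⟩

noncomputable def connectedPowersetCard (G : SimpleGraph V) (m : ℕ) (s : Finset V) :
    Finset (Finset V) :=
  (s.powersetCard m).filter fun t => (G.induce (t : Set V)).Connected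

theorem mem_connectedPowersetCard {m : ℕ} {s t : Finset V} :
    t ∈ G.connectedPowersetCard m s ↔
      (t ⊆ s ∧ #t = m) ∧ (G.induce (t : Set V)).Connected := by
  rw [connectedPowersetCard, Finset.mem_filter, Finset.mem_powersetCard]

theorem connectedPowersetCard_mono (m : ℕ) {s s' : Finset V} (h : s ⊆ s') :
    G.connectedPowersetCard m s ⊆ G.connectedPowersetCard m s' :=
  Finset.filter_subset_filter _ (Finset.powersetCard_mono h)

theorem filter_subset_connectedPowersetCard_univ [Fintype V] (m : ℕ) (s : Finset V) :
    (G.connectedPowersetCard m univ).filter (· ⊆ s) = G.connectedPowersetCard m s := by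
  ext t
  simp only [Finset.mem_filter, mem_connectedPowersetCard, Finset.subset_univ, true_and]
  tauto

theorem card_sub_add_one_le_card_connectedPowersetCard {s : Finset V}
    (hs : (G.induce (s : Set V)).Connected) {m : ℕ} (hm : 1 ≤ m) (hms : m ≤ #s) :
    #s - m + 1 ≤ #(G.connectedPowersetCard m s) := by
  induction s using Finset.strongInduction with
  | H s ih =>
  obtain hms | hms := hms.eq_or_lt
  · have := Finset.card_pos.mpr
      ⟨s, mem_connectedPowersetCard.mpr ⟨⟨subset_rfl, hms.symm⟩, hs⟩⟩
    omega
  obtain ⟨u, hu, hsu⟩ := exists_connected_induce_erase hs (by omega)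
  have hcard := Finset.card_erase_of_mem hu
  have hrec := ih _ (Finset.erase_ssubset hu) hsu (by omega)
  obtain ⟨t, hts, hut, htm, ht⟩ := exists_connected_induce_subset_card hs hu hm hms.le
  have hsub : G.connectedPowersetCard m (s.erase u) ⊂ G.connectedPowersetCard m s := by
    refine Finset.ssubset_iff_subset_ne.mpr
      ⟨connectedPowersetCard_mono m (Finset.erase_subset u s), fun h => ?_⟩
    have ht' := mem_connectedPowersetCard.mpr ⟨⟨hts, htm⟩, ht⟩
    rw [← h, mem_connectedPowersetCard] at ht'
    simpa using ht'.1.1 hut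
  have := Finset.card_lt_card hsub
  omega

end SimpleGraph

theorem cCount_eq_card_connectedPowersetCard {V : Type*} [Fintype V] (G : SimpleGraph V)
    (k : ℕ) : cCount G k = #(G.connectedPowersetCard k univ) := by
  rw [cCount, SimpleGraph.connectedPowersetCard, Finset.powersetCard_eq_filter,
    Finset.powerset_univ, Finset.filter_filter]

theorem stmt1_general {V : Type*} [Fintype V] (G : SimpleGraph V)
    (n : ℕ) (hn : n = Fintype.card V)
    (k t : ℕ) (ht1 : 1 ≤ t) (htk : t ≤ k - 1) :
    (k - t + 1) * cCount G k ≤ (n - t).choose (k - t) * cCount G t := by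
  rw [cCount_eq_card_connectedPowersetCard, cCount_eq_card_connectedPowersetCard, mul_comm,
    mul_comm _ #_]
  refine Finset.card_mul_le_card_mul (fun S T => T ⊆ S) (fun S hS => ?_) (fun T hT => ?_)
  · obtain ⟨⟨-, hSk⟩, hS⟩ := SimpleGraph.mem_connectedPowersetCard.mp hS
    rw [Finset.bipartiteAbove, SimpleGraph.filter_subset_connectedPowersetCard_univ, ← hSk]
    exact SimpleGraph.card_sub_add_one_le_card_connectedPowersetCard hS ht1 (by omega)
  · obtain ⟨⟨-, hTt⟩, -⟩ := SimpleGraph.mem_connectedPowersetCard.mp hT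
    calc #((G.connectedPowersetCard k univ).bipartiteBelow (fun S T => T ⊆ S) T)
        ≤ #((univ.powersetCard k).filter (T ⊆ ·)) :=
          Finset.card_le_card (Finset.filter_subset_filter _ (Finset.filter_subset _ _))
      _ = (n - t).choose (k - t) := by
          rw [Finset.card_filter_powersetCard_subset T univ k (Finset.subset_univ T) (by omega),
            Finset.card_univ, hTt, hn]

theorem stmt1 {V : Type*} [Fintype V] (G : SimpleGraph V)
    (n : ℕ) (hn : n = Fintype.card V)
    (k t : ℕ) (hk2 : 2 ≤ k) (hkn : k ≤ n) (ht1 : 1 ≤ t) (htk : t ≤ k - 1) :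
    (k - t + 1) * cCount G k ≤ (n - t).choose (k - t) * cCount G t :=
  stmt1_general G n hn k t ht1 htk
end

section
/- For every graph $G$ on $n$ vertices with connected-set counts $c_k$, we have $2c_k \leq (n-k+1)c_{k-1}$ for all $k \in \{2,\dots,n\}$. -/
open Finset
open scoped Classical

/-! Double count the pairs `(S, T)` of connected vertex sets with `T ⊆ S`, `#S = k`, `#T = k - 1`.
Every connected `S` with at least two vertices has two vertices whose removal keeps it connected
(the leaves of a spanning tree), so each `S` lies above at least two `T`; and each `T` lies below
at most `n - (k - 1)` sets `S`, namely the sets `insert v T` with `v ∉ T`. -/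

namespace SimpleGraph

variable {V : Type*} {G : SimpleGraph V}

theorem Connected.exists_ne_connected_induce_compl_singleton [Finite V] [Nontrivial V]
    (hG : G.Connected) :
    ∃ u v : V, u ≠ v ∧ (G.induce {u}ᶜ).Connected ∧ (G.induce {v}ᶜ).Connected := by
  obtain ⟨T, hTG, hT⟩ := hG.exists_isTree_le
  have := Fintype.ofFinite V
  classical
  obtain ⟨u, v, huv, hu, hv⟩ := hT.exists_ne_and_degree_eq_one
  exact ⟨u, v, huv, (hT.connected.induce_compl_singleton_of_degree_eq_one hu).mono fun _ _ h => hTG h,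
    (hT.connected.induce_compl_singleton_of_degree_eq_one hv).mono fun _ _ h => hTG h⟩

theorem connected_induce_diff_singleton {s : Set V} {a : V} (ha : a ∈ s)
    (h : ((G.induce s).induce {⟨a, ha⟩}ᶜ).Connected) : (G.induce (s \ {a})).Connected :=
  h.map
    { toFun := fun x => ⟨x.1.1, x.1.2, fun hxa => x.2 (Subtype.ext hxa)⟩
      map_rel' := id }
    (fun y => ⟨⟨⟨y.1, y.2.1⟩, fun hya => y.2.2 (congrArg Subtype.val hya)⟩, rfl⟩)

theorem exists_ne_connected_induce_erase [DecidableEq V] {s : Finset V} (hs : 1 < s.card)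
    (hc : (G.induce (s : Set V)).Connected) :
    ∃ a ∈ s, ∃ b ∈ s, a ≠ b ∧ (G.induce (s.erase a : Set V)).Connected ∧
      (G.induce (s.erase b : Set V)).Connected := by
  have : Nontrivial (s : Set V) := by
    obtain ⟨x, hx, y, hy, hxy⟩ := Finset.one_lt_card.mp hs
    exact ⟨⟨x, hx⟩, ⟨y, hy⟩, fun h => hxy (congrArg Subtype.val h)⟩
  obtain ⟨⟨a, ha⟩, ⟨b, hb⟩, hab, hca, hcb⟩ := hc.exists_ne_connected_induce_compl_singleton
  refine ⟨a, ha, b, hb, fun h => hab (Subtype.ext h), ?_, ?_⟩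
  · rw [Finset.coe_erase]; exact connected_induce_diff_singleton ha hca
  · rw [Finset.coe_erase]; exact connected_induce_diff_singleton hb hcb

end SimpleGraph

theorem Finset.card_filter_superset_le {V : Type*} [Fintype V] [DecidableEq V]
    (𝒜 : Finset (Finset V)) (t : Finset V) (h𝒜 : ∀ s ∈ 𝒜, s.card = t.card + 1) :
    (𝒜.filter (t ⊆ ·)).card ≤ Fintype.card V - t.card := by
  calc (𝒜.filter (t ⊆ ·)).card ≤ ((univ \ t).image (insert · t)).card := by
        refine Finset.card_le_card fun s hs => ?_
        obtain ⟨hs𝒜, hts⟩ := Finset.mem_filter.mp hs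
        obtain ⟨a, hat, rfl⟩ := Finset.exists_eq_insert_iff.mpr ⟨hts, (h𝒜 s hs𝒜).symm⟩
        exact Finset.mem_image.mpr ⟨a, by simpa using hat, rfl⟩
    _ ≤ (univ \ t).card := Finset.card_image_le
    _ = Fintype.card V - t.card := by rw [Finset.card_univ_sdiff]

theorem stmt2_general {V : Type*} [Fintype V] (G : SimpleGraph V)
    (n : ℕ) (hn : n = Fintype.card V)
    (k : ℕ) (hk2 : 2 ≤ k) :
    2 * cCount G k ≤ (n - k + 1) * cCount G (k - 1) := by
  set A := univ.filter fun s : Finset V => s.card = k ∧ (G.induce (s : Set V)).Connected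
  set B := univ.filter fun s : Finset V => s.card = k - 1 ∧ (G.induce (s : Set V)).Connected
  have two_le_above : ∀ s ∈ A, 2 ≤ (B.bipartiteAbove (fun s t => t ⊆ s) s).card := by
    intro s hs
    obtain ⟨hsk, hsc⟩ := (Finset.mem_filter.mp hs).2
    obtain ⟨a, ha, b, hb, hab, hca, hcb⟩ :=
      SimpleGraph.exists_ne_connected_induce_erase (by omega) hsc
    have hmem : ∀ x ∈ s, (G.induce (s.erase x : Set V)).Connected →
        s.erase x ∈ B.bipartiteAbove (fun s t => t ⊆ s) s := fun x hx hc => by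
      simp [Finset.bipartiteAbove, B, Finset.card_erase_of_mem hx, hsk, hc, Finset.erase_subset]
    calc 2 = ({s.erase a, s.erase b} : Finset (Finset V)).card :=
          (Finset.card_pair fun h => hab (Finset.erase_injOn s ha hb h)).symm
      _ ≤ _ := Finset.card_le_card (by
          simp [Finset.insert_subset_iff, hmem a ha hca, hmem b hb hcb])
  have below_le : ∀ t ∈ B, (A.bipartiteBelow (fun s t => t ⊆ s) t).card ≤ n - k + 1 := by
    intro t ht
    have htk := (Finset.mem_filter.mp ht).2.1
    refine (Finset.card_filter_superset_le A t fun s hs => ?_).trans (by omega)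
    rw [(Finset.mem_filter.mp hs).2.1, htk]; omega
  have hAB := Finset.card_mul_le_card_mul _ two_le_above below_le
  rw [mul_comm, mul_comm (n - k + 1)]
  exact hAB

theorem stmt2 {V : Type*} [Fintype V] (G : SimpleGraph V)
    (n : ℕ) (hn : n = Fintype.card V)
    (k : ℕ) (hk2 : 2 ≤ k) (hkn : k ≤ n) :
    2 * cCount G k ≤ (n - k + 1) * cCount G (k - 1) :=
  stmt2_general G n hn k hk2
end

section
/- For every $n \geq 2$, the node reliability of the complete bipartite graph $K_{n,n}$ equals $1 - 2(1-p)^n + 2np(1-p)^{2n-1} + (1-p)^{2n}$, and this function is strictly increasing on the interval $(0,1)$. -/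
open Finset
open scoped Classical

/-!
A vertex set of `K_{a,b}` induces a connected subgraph iff it meets both sides or is a single
vertex. With `q = 1 - p`, the sets of the first kind contribute `(1 - q^a)(1 - q^b)`, since their
weights factor over the two sides, and the singletons contribute `(a + b) p q^(a+b-1)`.
For `a = b = k + 1` the derivative in `p` is `2(k+1) q^k (1 - (2k+1) p q^k)`, which is positive
on `(0,1)`: `p ∑_{i ≤ 2k} q^i = 1 - q^(2k+1) < 1`, and pairing `q^i + q^(2k-i) ≥ 2 q^k` shows that
the geometric sum is at least `(2k+1) q^k`.
-/

lemma two_mul_pow_le_pow_add_pow {t : ℝ} (ht : 0 ≤ t) {i j k : ℕ} (h : i + j = 2 * k) :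
    2 * t ^ k ≤ t ^ i + t ^ j := by
  wlog hij : i ≤ j generalizing i j
  · linarith [this (j := i) (i := j) (by omega) (by omega)]
  obtain ⟨d, rfl⟩ : ∃ d, k = i + d := ⟨k - i, by omega⟩
  obtain rfl : j = i + d + d := by omega
  have hsq : 0 ≤ t ^ i * (1 - t ^ d) ^ 2 := by positivity
  linear_combination hsq

lemma odd_mul_pow_le_geom_sum {t : ℝ} (ht : 0 ≤ t) (k : ℕ) :
    (2 * k + 1) * t ^ k ≤ ∑ i ∈ range (2 * k + 1), t ^ i := by
  have hreflect := sum_range_reflect (fun i => t ^ i) (2 * k + 1)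
  have hpair : ∑ _i ∈ range (2 * k + 1), 2 * t ^ k ≤
      ∑ i ∈ range (2 * k + 1), (t ^ i + t ^ (2 * k - i)) :=
    sum_le_sum fun i hi => two_mul_pow_le_pow_add_pow ht (by simp at hi; omega)
  simp only [sum_const, card_range, nsmul_eq_mul, sum_add_distrib, Nat.add_sub_cancel]
    at hpair hreflect
  push_cast at hpair
  linarith

lemma odd_mul_one_sub_mul_pow_lt_one (k : ℕ) {t : ℝ} (ht : 0 < t) :
    (2 * k + 1) * (1 - t) * t ^ k < 1 := by
  rcases le_or_gt t 1 with ht1 | ht1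
  · have hgeom := geom_sum_mul_neg t (2 * k + 1)
    have hsum := mul_le_mul_of_nonneg_left (odd_mul_pow_le_geom_sum ht.le k) (sub_nonneg.2 ht1)
    have hpow := pow_pos ht (2 * k + 1)
    nlinarith
  · have hpos : 0 < (2 * k + 1) * t ^ k := by positivity
    nlinarith

lemma hasDerivAt_nRel_formula (k : ℕ) (x : ℝ) :
    HasDerivAt (fun p : ℝ => 1 - 2 * (1 - p) ^ (k + 1) + 2 * (k + 1 : ℕ) * p * (1 - p) ^ (2 * k + 1)
        + (1 - p) ^ (2 * k + 2))
      (2 * (k + 1) * (1 - x) ^ k * (1 - (2 * k + 1) * x * (1 - x) ^ k)) x := by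
  have hq : HasDerivAt (fun p : ℝ => 1 - p) (-1) x := (hasDerivAt_id x).const_sub 1
  have h := ((((hq.pow (k + 1)).const_mul 2).const_sub 1).add
    (((hasDerivAt_id x).mul (hq.pow (2 * k + 1))).const_mul (2 * (k + 1 : ℕ) : ℝ))).add
    (hq.pow (2 * k + 2))
  refine (h.congr_deriv ?_).congr_of_eventuallyEq (.of_forall fun p => ?_)
  · simp only [Pi.pow_apply, id, Nat.add_sub_cancel, show 2 * k + 2 - 1 = 2 * k + 1 by omega]
    push_cast
    ring
  · simp only [Pi.add_apply, Pi.pow_apply, Pi.mul_apply, id]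
    ring

lemma strictMonoOn_nRel_formula {n : ℕ} (hn : 1 ≤ n) :
    StrictMonoOn (fun p : ℝ => 1 - 2 * (1 - p) ^ n + 2 * n * p * (1 - p) ^ (2 * n - 1)
      + (1 - p) ^ (2 * n)) (Set.Ioo 0 1) := by
  obtain ⟨k, rfl⟩ : ∃ k, n = k + 1 := ⟨n - 1, by omega⟩
  rw [show 2 * (k + 1) - 1 = 2 * k + 1 by omega, show 2 * (k + 1) = 2 * k + 2 by omega]
  refine strictMonoOn_of_hasDerivWithinAt_pos (convex_Ioo 0 1) (by fun_prop)
    (fun x _ => (hasDerivAt_nRel_formula k x).hasDerivWithinAt) fun x hx => ?_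
  rw [interior_Ioo] at hx
  have hlt := odd_mul_one_sub_mul_pow_lt_one k (sub_pos.2 hx.2)
  rw [sub_sub_cancel] at hlt
  have hpow : 0 < (1 - x) ^ k := pow_pos (sub_pos.2 hx.2) k
  have hfactor : 0 < 1 - (2 * k + 1) * x * (1 - x) ^ k := by linarith
  positivity

section SubsetSums

variable {R : Type*} [CommRing R] (ι : Type*) [Fintype ι] (a b : R)

lemma sum_nonempty_pow_mul_pow :
    ∑ s : Finset ι, (if s.Nonempty then a ^ #s * b ^ (Fintype.card ι - #s) else 0) =
      (a + b) ^ Fintype.card ι - b ^ Fintype.card ι := by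
  rw [eq_sub_iff_add_eq, ← Fintype.sum_pow_mul_eq_add_pow, ← sum_filter,
    ← sum_filter_add_sum_filter_not univ Finset.Nonempty]
  simp [not_nonempty_iff_eq_empty, filter_eq']

lemma sum_card_eq_one_pow_mul_pow :
    ∑ s : Finset ι, (if #s = 1 then a ^ #s * b ^ (Fintype.card ι - #s) else 0) =
      Fintype.card ι * a * b ^ (Fintype.card ι - 1) := by
  rw [← sum_filter, ← powerset_univ, ← powersetCard_eq_filter,
    sum_congr rfl fun s hs => by rw [(mem_powersetCard.1 hs).2], sum_const, card_powersetCard]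
  simp [mul_assoc]

end SubsetSums

section CompleteBipartite

variable {α β : Type*}

lemma sum_finset_sum_type {M : Type*} [AddCommMonoid M] [Fintype α] [Fintype β]
    (f : Finset (α ⊕ β) → M) : ∑ u, f u = ∑ s : Finset α, ∑ t : Finset β, f (s.disjSum t) := by
  rw [← sumEquiv.symm.toEquiv.sum_comp, Fintype.sum_prod_type]
  rfl

lemma completeBipartiteGraph_induce_connected_iff (u : Finset (α ⊕ β)) :
    ((completeBipartiteGraph α β).induce (u : Set (α ⊕ β))).Connected ↔
      (u.toLeft.Nonempty ∧ u.toRight.Nonempty) ∨ #u = 1 := by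
  constructor
  · refine fun h => or_iff_not_imp_right.2 fun hcard => ?_
    obtain ⟨v⟩ := h.nonempty
    have hpos := card_pos.2 ⟨v.1, v.2⟩
    have : Nontrivial (u : Set (α ⊕ β)) :=
      Set.nontrivial_coe_sort.2 (one_lt_card_iff_nontrivial.1 (by omega))
    obtain ⟨w, hvw⟩ := h.preconnected.exists_adj_of_nontrivial v
    obtain ⟨a | b, hv⟩ := v <;> obtain ⟨c | d, hw⟩ := w <;> simp at hvw
    · exact ⟨⟨a, mem_toLeft.2 hv⟩, ⟨d, mem_toRight.2 hw⟩⟩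
    · exact ⟨⟨c, mem_toLeft.2 hw⟩, ⟨b, mem_toRight.2 hv⟩⟩
  · rw [SimpleGraph.connected_iff_exists_forall_reachable]
    rintro (⟨⟨a, ha⟩, ⟨b, hb⟩⟩ | hcard)
    · have hab : ((completeBipartiteGraph α β).induce (u : Set (α ⊕ β))).Adj
          ⟨.inl a, mem_toLeft.1 ha⟩ ⟨.inr b, mem_toRight.1 hb⟩ := by simp
      refine ⟨⟨.inl a, mem_toLeft.1 ha⟩, ?_⟩
      rintro ⟨c | d, hw⟩
      · exact hab.reachable.trans (SimpleGraph.Adj.reachable (by simp))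
      · exact SimpleGraph.Adj.reachable (by simp)
    · obtain ⟨x, rfl⟩ := card_eq_one.1 hcard
      refine ⟨⟨x, by simp⟩, ?_⟩
      rintro ⟨y, hy⟩
      obtain rfl : y = x := by simpa using hy
      rfl

lemma nRel_completeBipartiteGraph [Fintype α] [Fintype β] (p : ℝ) :
    nRel (completeBipartiteGraph α β) p =
      (1 - (1 - p) ^ Fintype.card α) * (1 - (1 - p) ^ Fintype.card β) +
        (Fintype.card α + Fintype.card β) * p * (1 - p) ^ (Fintype.card α + Fintype.card β - 1) := by
  unfold nRel
  simp only [completeBipartiteGraph_induce_connected_iff]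
  set q := 1 - p
  have hpq : p + q = 1 := by ring
  have hsplit : ∀ u : Finset (α ⊕ β),
      (if (u.toLeft.Nonempty ∧ u.toRight.Nonempty) ∨ #u = 1 then
        p ^ #u * q ^ (Fintype.card (α ⊕ β) - #u) else 0) =
      (if u.toLeft.Nonempty ∧ u.toRight.Nonempty then
        p ^ #u * q ^ (Fintype.card (α ⊕ β) - #u) else 0) +
      (if #u = 1 then p ^ #u * q ^ (Fintype.card (α ⊕ β) - #u) else 0) := by
    intro u
    have hdisjoint : ¬ ((u.toLeft.Nonempty ∧ u.toRight.Nonempty) ∧ #u = 1) := by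
      rintro ⟨⟨hL, hR⟩, h1⟩
      have := card_toLeft_add_card_toRight (u := u)
      have := hL.card_pos
      have := hR.card_pos
      omega
    split_ifs <;> simp_all
  have hprod : ∀ (s : Finset α) (t : Finset β),
      (if (s.disjSum t).toLeft.Nonempty ∧ (s.disjSum t).toRight.Nonempty then
        p ^ #(s.disjSum t) * q ^ (Fintype.card (α ⊕ β) - #(s.disjSum t)) else 0) =
      (if s.Nonempty then p ^ #s * q ^ (Fintype.card α - #s) else 0) *
        (if t.Nonempty then p ^ #t * q ^ (Fintype.card β - #t) else 0) := by
    intro s t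
    have hs := card_le_univ s
    have ht := card_le_univ t
    rw [toLeft_disjSum, toRight_disjSum, card_disjSum, Fintype.card_sum,
      show Fintype.card α + Fintype.card β - (#s + #t) = (Fintype.card α - #s) + (Fintype.card β - #t)
        by omega]
    split_ifs <;> simp_all [pow_add, mul_mul_mul_comm]
  rw [sum_congr rfl fun u _ => hsplit u, sum_add_distrib, sum_card_eq_one_pow_mul_pow,
    sum_finset_sum_type]
  simp only [hprod]
  rw [← sum_mul_sum, sum_nonempty_pow_mul_pow, sum_nonempty_pow_mul_pow, hpq, one_pow,
    Fintype.card_sum]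
  push_cast
  ring

end CompleteBipartite

theorem stmt4 (n : ℕ) (hn : 2 ≤ n) :
    (∀ p : ℝ, nRel (completeBipartiteGraph (Fin n) (Fin n)) p =
      1 - 2 * (1 - p) ^ n + 2 * n * p * (1 - p) ^ (2 * n - 1) + (1 - p) ^ (2 * n)) ∧
    StrictMonoOn (nRel (completeBipartiteGraph (Fin n) (Fin n))) (Set.Ioo (0:ℝ) 1) := by
  have hformula : ∀ p : ℝ, nRel (completeBipartiteGraph (Fin n) (Fin n)) p =
      1 - 2 * (1 - p) ^ n + 2 * n * p * (1 - p) ^ (2 * n - 1) + (1 - p) ^ (2 * n) := fun p => by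
    simp only [nRel_completeBipartiteGraph, Fintype.card_fin, ← two_mul]
    ring
  refine ⟨hformula, ?_⟩
  rw [funext hformula]
  exact strictMonoOn_nRel_formula (by omega)
end

section
/- Let $G$ be a graph on $n \geq 2$ vertices. Then the second derivative of the node reliability polynomial of $G$ at $p = 0$ equals $2m - 2n(n-1)$, where $m$ is the number of edges of $G$; in particular this quantity is at most $-n(n-1) < 0$, so $\mathrm{nRel}(G;p)$ is concave down for $p$ sufficiently close to $0$. -/
open Finset
open scoped Classical

open Polynomial

lemma conn_singleton {V : Type*} (G : SimpleGraph V) (v : V) :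
    (G.induce ({v} : Set V)).Connected := by
  rw [SimpleGraph.connected_iff]
  refine ⟨?_, ⟨⟨v, rfl⟩⟩⟩
  intro a b
  have : a = b := Subtype.ext (a.2.trans b.2.symm)
  exact this ▸ SimpleGraph.Reachable.refl a

lemma conn_pair {V : Type*} (G : SimpleGraph V) (x y : V) (hxy : x ≠ y) :
    (G.induce ({x, y} : Set V)).Connected ↔ G.Adj x y := by
  constructor
  · intro h
    have hx : x ∈ ({x,y} : Set V) := Or.inl rfl
    have hy : y ∈ ({x,y} : Set V) := Or.inr rfl
    obtain ⟨w⟩ := h.preconnected ⟨x, hx⟩ ⟨y, hy⟩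
    cases w with
    | nil => exact absurd rfl hxy
    | cons h' w' =>
      rename_i b
      have hadj : G.Adj x b.1 := h'
      rcases b.2 with hb | hb
      · exact absurd (hb ▸ hadj) G.irrefl
      · exact hb ▸ hadj
  · intro h
    rw [SimpleGraph.connected_iff]
    refine ⟨?_, ⟨⟨x, Or.inl rfl⟩⟩⟩
    rintro ⟨a, ha⟩ ⟨b, hb⟩
    have key : ∀ c (hc : c ∈ ({x,y} : Set V)),
        (G.induce ({x,y} : Set V)).Reachable ⟨x, Or.inl rfl⟩ ⟨c, hc⟩ := by
      rintro c (rfl | rfl)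
      · rfl
      · exact SimpleGraph.Adj.reachable (by exact h)
    exact ((key a ha).symm).trans (key b hb)

lemma count_one {V : Type*} [Fintype V] (G : SimpleGraph V) :
    cCount G 1 = Fintype.card V := by
  rw [cCount]
  symm
  rw [← Finset.card_univ]
  apply Finset.card_bij (fun (v : V) _ => ({v} : Finset V))
  · intro v _
    simp only [Finset.mem_filter, Finset.mem_univ, true_and]
    refine ⟨Finset.card_singleton v, ?_⟩
    rw [show ((({v} : Finset V)) : Set V) = ({v} : Set V) by simp]
    exact conn_singleton G v
  · intro a _ b _ h
    exact Finset.singleton_injective h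
  · intro s hs
    simp only [Finset.mem_filter, Finset.mem_univ, true_and] at hs
    obtain ⟨v, rfl⟩ := Finset.card_eq_one.mp hs.1
    exact ⟨v, Finset.mem_univ v, rfl⟩

lemma count_two {V : Type*} [Fintype V] [DecidableEq V] (G : SimpleGraph V)
    [DecidableRel G.Adj] :
    cCount G 2 = G.edgeFinset.card := by
  rw [cCount]
  symm
  apply Finset.card_bij (fun (e : Sym2 V) _ => Sym2.lift ⟨fun a b => ({a, b} : Finset V),
    fun a b => Finset.pair_comm a b⟩ e)
  · rintro e he
    induction e with
    | _ x y =>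
      simp only [SimpleGraph.mem_edgeFinset, SimpleGraph.mem_edgeSet] at he
      simp only [Sym2.lift_mk, Finset.mem_filter, Finset.mem_univ, true_and]
      constructor
      · exact Finset.card_pair he.ne
      · rw [show (({x,y} : Finset V) : Set V) = ({x,y} : Set V) by simp]
        exact (conn_pair G x y he.ne).mpr he
  · rintro e1 he1 e2 he2 h
    induction e1 with
    | _ a b =>
      induction e2 with
      | _ c d =>
        simp only [SimpleGraph.mem_edgeFinset, SimpleGraph.mem_edgeSet] at he1 he2
        simp only [Sym2.lift_mk] at h
        have ha : a ∈ ({c, d} : Finset V) := h ▸ (by simp)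
        have hb : b ∈ ({c, d} : Finset V) := h ▸ (by simp)
        simp only [Finset.mem_insert, Finset.mem_singleton] at ha hb
        rw [Sym2.eq_iff]
        rcases ha with rfl | rfl <;> rcases hb with rfl | rfl
        · exact absurd rfl he1.ne
        · tauto
        · tauto
        · exact absurd rfl he1.ne
  · rintro s hs
    simp only [Finset.mem_filter, Finset.mem_univ, true_and] at hs
    obtain ⟨x, y, hxy, rfl⟩ := Finset.card_eq_two.mp hs.1
    have hconn := hs.2
    rw [show ((({x,y} : Finset V)) : Set V) = ({x,y} : Set V) by simp] at hconn
    have hadj : G.Adj x y := (conn_pair G x y hxy).mp hconn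
    exact ⟨s(x, y), by simp [SimpleGraph.mem_edgeFinset, hadj], rfl⟩

lemma coeff_one_sub_X_one (j : ℕ) (hj : 1 ≤ j) :
    ((1 - X : ℝ[X]) ^ j).coeff 1 = -(j : ℝ) := by
  have h : (1 - X : ℝ[X]) = C (-1) * (X + C (-1)) := by
    simp [mul_add, ← Polynomial.C_mul]; ring
  rw [h, mul_pow, ← Polynomial.C_pow, Polynomial.coeff_C_mul,
    Polynomial.coeff_X_add_C_pow]
  rw [Nat.choose_one_right]
  rw [show (-1 : ℝ) ^ j * ((-1) ^ (j - 1) * j) = (-1) ^ (j + (j - 1)) * j by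
    rw [pow_add]; ring]
  rw [show j + (j - 1) = 2 * (j - 1) + 1 by omega]
  rw [pow_succ, pow_mul]
  norm_num

/-- The node reliability polynomial as an actual polynomial. -/
noncomputable def nRelPoly {V : Type*} [Fintype V] (G : SimpleGraph V) : ℝ[X] :=
  ∑ s : Finset V, if (G.induce (s : Set V)).Connected
    then X ^ s.card * (1 - X) ^ (Fintype.card V - s.card) else 0

lemma nRel_eq_eval {V : Type*} [Fintype V] (G : SimpleGraph V) :
    nRel G = fun p => (nRelPoly G).eval p := by
  funext p
  simp only [nRel, nRelPoly, Polynomial.eval_finset_sum, apply_ite (Polynomial.eval p)]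
  simp

lemma coeff_nRelPoly_two {V : Type*} [Fintype V] (G : SimpleGraph V)
    (hn2 : 2 ≤ Fintype.card V) :
    (nRelPoly G).coeff 2 =
      (cCount G 2 : ℝ) - (cCount G 1 : ℝ) * ((Fintype.card V : ℝ) - 1) := by
  rw [nRelPoly, Polynomial.finset_sum_coeff]
  have key : ∀ s : Finset V,
      (if (G.induce (s : Set V)).Connected
        then X ^ s.card * (1 - X) ^ (Fintype.card V - s.card) else (0 : ℝ[X])).coeff 2
      = -((Fintype.card V : ℝ) - 1) *
          (if s.card = 1 ∧ (G.induce (s : Set V)).Connected then 1 else 0)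
        + (if s.card = 2 ∧ (G.induce (s : Set V)).Connected then (1 : ℝ) else 0) := by
    intro s
    by_cases hc : (G.induce (s : Set V)).Connected
    · have hpos : 1 ≤ s.card := by
        obtain ⟨⟨v, hv⟩⟩ := hc.nonempty
        exact Finset.card_pos.mpr ⟨v, hv⟩
      rw [if_pos hc]
      rcases hcard : s.card with _ | _ | _ | k
      · omega
      · -- card = 1
        rw [if_pos ⟨by omega, hc⟩, if_neg (by omega), add_zero, mul_one]
        rw [mul_comm, pow_one, ← pow_one (X : ℝ[X]), Polynomial.coeff_mul_X_pow']
        norm_num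
        rw [coeff_one_sub_X_one (Fintype.card V - 1) (by omega)]
        push_cast [Nat.cast_sub (by omega : 1 ≤ Fintype.card V)]
        ring
      · -- card = 2
        rw [if_neg (by omega), if_pos ⟨rfl, hc⟩, mul_zero, zero_add]
        rw [mul_comm, Polynomial.coeff_mul_X_pow']
        simp [Polynomial.coeff_zero_eq_eval_zero]
      · -- card ≥ 3
        rw [if_neg (by omega), if_neg (by omega), mul_zero, add_zero]
        rw [mul_comm, Polynomial.coeff_mul_X_pow']
        rw [if_neg (by omega)]
    · simp [hc]
  simp only [key]
  rw [Finset.sum_add_distrib, ← Finset.mul_sum, Finset.sum_boole, Finset.sum_boole]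
  have h1 : ((univ : Finset (Finset V)).filter
      (fun s : Finset V => s.card = 1 ∧ (G.induce (s : Set V)).Connected)).card
      = cCount G 1 := rfl
  have h2 : ((univ : Finset (Finset V)).filter
      (fun s : Finset V => s.card = 2 ∧ (G.induce (s : Set V)).Connected)).card
      = cCount G 2 := rfl
  rw [h1, h2]
  ring

lemma iteratedDeriv_two_nRel {V : Type*} [Fintype V] (G : SimpleGraph V) :
    iteratedDeriv 2 (nRel G) =
      fun p => (Polynomial.derivative (Polynomial.derivative (nRelPoly G))).eval p := by
  rw [nRel_eq_eval]
  have h1 : deriv (fun p => (nRelPoly G).eval p)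
      = fun p => ((Polynomial.derivative (nRelPoly G)).eval p) := by
    funext x; exact Polynomial.deriv (nRelPoly G)
  rw [show (2 : ℕ) = 1 + 1 from rfl, iteratedDeriv_succ, iteratedDeriv_succ,
    iteratedDeriv_zero, h1]
  funext x
  exact Polynomial.deriv _

theorem stmt10 {V : Type*} [Fintype V] [DecidableEq V] (G : SimpleGraph V)
    [DecidableRel G.Adj] (n : ℕ) (hn : n = Fintype.card V) (hn2 : 2 ≤ n)
    (m : ℕ) (hm : m = G.edgeFinset.card) :
    iteratedDeriv 2 (nRel G) 0 = 2 * (m:ℝ) - 2 * n * (n - 1) ∧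
    2 * (m:ℝ) - 2 * n * (n - 1) ≤ -(n * (n - 1)) ∧
    ∃ ε > (0:ℝ), ∀ p ∈ Set.Ioo (0:ℝ) ε, iteratedDeriv 2 (nRel G) p < 0 := by
  have hcard : 2 ≤ Fintype.card V := hn ▸ hn2
  have hcoeff : (nRelPoly G).coeff 2 = (m : ℝ) - (n : ℝ) * ((n : ℝ) - 1) := by
    rw [coeff_nRelPoly_two G hcard, count_one, count_two, ← hn, hm]
  have hD := iteratedDeriv_two_nRel G
  have hval : ∀ p : ℝ, iteratedDeriv 2 (nRel G) p
      = (Polynomial.derivative (Polynomial.derivative (nRelPoly G))).eval p := by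
    intro p; rw [hD]
  have h0 : iteratedDeriv 2 (nRel G) 0 = 2 * (m : ℝ) - 2 * n * (n - 1) := by
    rw [hval 0, ← Polynomial.coeff_zero_eq_eval_zero, Polynomial.coeff_derivative,
      Polynomial.coeff_derivative, hcoeff]
    push_cast
    ring
  have hm2 : 2 * m ≤ n * (n - 1) := by
    have h1 : m ≤ n.choose 2 := by
      rw [hm, hn]; exact SimpleGraph.card_edgeFinset_le_card_choose_two
    have h2 : 2 * n.choose 2 = n * (n - 1) := by
      rw [Nat.choose_two_right]
      have he : 2 ∣ n * (n - 1) := by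
        rcases Nat.even_or_odd n with h | h
        · exact Dvd.dvd.mul_right h.two_dvd _
        · exact Dvd.dvd.mul_left (Nat.Odd.sub_odd h odd_one).two_dvd _
      omega
    omega
  have hcast : (2 : ℝ) * m ≤ (n : ℝ) * ((n : ℝ) - 1) := by
    have := (Nat.cast_le (α := ℝ)).mpr hm2
    push_cast [Nat.cast_sub (by omega : 1 ≤ n)] at this
    linarith
  refine ⟨h0, by linarith, ?_⟩
  have hn1 : (1 : ℝ) ≤ (n : ℝ) - 1 := by
    have : (2 : ℝ) ≤ n := by exact_mod_cast hn2
    linarith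
  have hneg : iteratedDeriv 2 (nRel G) 0 < 0 := by
    rw [h0]
    nlinarith
  have hcont : Continuous (iteratedDeriv 2 (nRel G)) := by
    rw [hD]
    exact Polynomial.continuous _
  have hopen : IsOpen {p : ℝ | iteratedDeriv 2 (nRel G) p < 0} :=
    isOpen_lt hcont continuous_const
  obtain ⟨ε, hε, hball⟩ := Metric.isOpen_iff.mp hopen 0 hneg
  refine ⟨ε, hε, fun p hp => ?_⟩
  apply hball
  rw [Metric.mem_ball, Real.dist_eq, sub_zero, abs_of_pos hp.1]
  exact hp.2
end

section
/- For the star $K_{1,n-1}$ with $n \geq 4$, the node reliability equals $p + (n-1)p(1-p)^{n-1}$, its second derivative equals $(n-1)^2(np-2)(1-p)^{n-3}$, and consequently $\mathrm{nRel}(K_{1,n-1};p)$ is concave down on $(0, 2/n)$ and concave up on $(2/n, 1)$, with a unique inflection point at $p = 2/n$. -/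
/-!
In the star, a vertex set induces a connected subgraph exactly when it contains the centre or
is a single leaf. The sets containing the centre have total probability `p` (binomial theorem on
the leaves), and the `n - 1` single leaves contribute `p (1 - p) ^ (n - 1)` each. Differentiating
`p + (n - 1) p (1 - p) ^ (n - 1)` twice gives `(n - 1)² (n p - 2) (1 - p) ^ (n - 3)`, whose sign on
`(0, 1)` is that of `n p - 2`.
-/

open Finset
open scoped Classical

namespace SimpleGraph

variable {V : Type*}

lemma induce_starGraph_connected_iff (c : V) (s : Finset V) :
    ((starGraph c).induce (s : Set V)).Connected ↔ c ∈ s ∨ #s = 1 := by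
  constructor
  · intro hconn
    refine or_iff_not_imp_left.mpr fun hc => ?_
    have hbot : (starGraph c).induce (s : Set V) = ⊥ := by
      ext ⟨u, hu⟩ ⟨v, hv⟩
      simp only [comap_adj, Function.Embedding.coe_subtype, starGraph_adj, bot_adj, iff_false]
      rintro ⟨-, rfl | rfl⟩ <;> simp_all
    rw [hbot, connected_bot_iff] at hconn
    obtain ⟨hsub, ⟨⟨a, ha⟩⟩⟩ := hconn
    exact card_eq_one.mpr ⟨a, eq_singleton_iff_unique_mem.mpr ⟨ha, fun b hb =>
      congrArg Subtype.val (Subsingleton.elim (⟨b, hb⟩ : (s : Set V)) ⟨a, ha⟩)⟩⟩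
  · rintro (hc | hs)
    · refine Connected.of_isUniversal (v := ⟨c, hc⟩) fun w hw => ?_
      simpa [starGraph_adj] using fun h => hw (Subtype.ext h)
    · obtain ⟨a, rfl⟩ := card_eq_one.mp hs
      rw [coe_singleton, induce_singleton_eq_top]
      exact connected_top

theorem nRel_starGraph [Fintype V] (c : V) (p : ℝ) :
    nRel (starGraph c) p =
      p + (Fintype.card V - 1 : ℝ) * p * (1 - p) ^ (Fintype.card V - 1) := by
  set A := univ.erase c
  have hA : #A = Fintype.card V - 1 := by simp [A, card_erase_of_mem]
  have hcA : c ∉ A := notMem_erase c univ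
  have hV : 0 < Fintype.card V := Fintype.card_pos_iff.mpr ⟨c⟩
  rw [nRel, ← powerset_univ, ← insert_erase (mem_univ c), sum_powerset_insert hcA]
  simp only [induce_starGraph_connected_iff, mem_insert_self, true_or, if_true]
  have leaves : ∑ t ∈ A.powerset,
      (if c ∈ t ∨ #t = 1 then p ^ #t * (1 - p) ^ (Fintype.card V - #t) else 0) =
      (Fintype.card V - 1 : ℝ) * p * (1 - p) ^ (Fintype.card V - 1) := by
    calc _ = ∑ t ∈ A.powerset with #t = 1, p ^ #t * (1 - p) ^ (Fintype.card V - #t) := by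
          rw [sum_filter]
          refine sum_congr rfl fun t ht => if_congr ?_ rfl rfl
          rw [or_iff_right fun h => hcA (mem_powerset.mp ht h)]
      _ = ∑ t ∈ A.powersetCard 1, p * (1 - p) ^ (Fintype.card V - 1) := by
          rw [← powersetCard_eq_filter]
          exact sum_congr rfl fun t ht => by rw [(mem_powersetCard.mp ht).2, pow_one]
      _ = _ := by
          rw [sum_const, card_powersetCard, Nat.choose_one_right, hA, nsmul_eq_mul,
            Nat.cast_sub hV, Nat.cast_one, mul_assoc]
  have center : ∑ t ∈ A.powerset,
      p ^ #(insert c t) * (1 - p) ^ (Fintype.card V - #(insert c t)) = p := by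
    calc _ = ∑ t ∈ A.powerset, p * (p ^ #t * (1 - p) ^ (#A - #t)) := by
          refine sum_congr rfl fun t ht => ?_
          rw [card_insert_of_notMem fun h => hcA (mem_powerset.mp ht h), hA, pow_succ',
            Nat.sub_add_eq, Nat.sub_right_comm, mul_assoc]
      _ = p := by rw [← mul_sum, sum_pow_mul_eq_add_pow]; simp
  rw [leaves, center, add_comm]

end SimpleGraph

lemma iteratedDeriv_two_add_mul_mul_one_sub_pow (k : ℕ) (p : ℝ) :
    iteratedDeriv 2 (fun x : ℝ => x + (k + 2) * x * (1 - x) ^ (k + 2)) p =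
      (k + 2) ^ 2 * ((k + 3) * p - 2) * (1 - p) ^ k := by
  have hsub (x : ℝ) : HasDerivAt (fun x : ℝ => 1 - x) (-1) x := (hasDerivAt_id x).const_sub 1
  have first (x : ℝ) : HasDerivAt (fun x : ℝ => x + (k + 2) * x * (1 - x) ^ (k + 2))
      (1 + (k + 2) * ((1 - x) ^ (k + 1) * (1 - (k + 3) * x))) x :=
    ((hasDerivAt_id x).add (((hasDerivAt_id x).const_mul ((k : ℝ) + 2)).mul
      ((hsub x).pow (k + 2)))).congr_deriv (by simp only [id_eq, Pi.pow_apply]; push_cast; ring)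
  have second : HasDerivAt (fun x : ℝ => 1 + (k + 2) * ((1 - x) ^ (k + 1) * (1 - (k + 3) * x)))
      ((k + 2) ^ 2 * ((k + 3) * p - 2) * (1 - p) ^ k) p :=
    ((((hsub p).pow (k + 1)).mul (((hasDerivAt_id p).const_mul ((k : ℝ) + 3)).const_sub 1)
      |>.const_mul ((k : ℝ) + 2)).const_add 1).congr_deriv
        (by simp only [id_eq, Pi.pow_apply]; push_cast; ring)
  rw [iteratedDeriv_succ, iteratedDeriv_one, funext fun x => (first x).deriv]
  exact second.deriv

theorem stmt11 (n : ℕ) (hn : 4 ≤ n) (G : SimpleGraph (Fin n))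
    (hG : ∀ u v, G.Adj u v ↔ u ≠ v ∧ (u.val = 0 ∨ v.val = 0)) :
    (∀ p : ℝ, nRel G p = p + (n - 1) * p * (1 - p) ^ (n - 1)) ∧
    (∀ p : ℝ, iteratedDeriv 2 (nRel G) p =
      ((n:ℝ) - 1) ^ 2 * (n * p - 2) * (1 - p) ^ (n - 3)) ∧
    (∀ p ∈ Set.Ioo (0:ℝ) (2 / n), iteratedDeriv 2 (nRel G) p < 0) ∧
    (∀ p ∈ Set.Ioo ((2:ℝ) / n) 1, 0 < iteratedDeriv 2 (nRel G) p) ∧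
    iteratedDeriv 2 (nRel G) (2 / n) = 0 := by
  obtain ⟨k, rfl⟩ : ∃ k, n = k + 3 := ⟨n - 3, by omega⟩
  have hstar : G = SimpleGraph.starGraph 0 := by
    ext u v
    simp only [hG, SimpleGraph.starGraph_adj, Fin.ext_iff, Fin.val_zero]
  have hrel (p : ℝ) : nRel G p = p + ((k + 3 : ℕ) - 1 : ℝ) * p * (1 - p) ^ (k + 3 - 1) := by
    rw [hstar, SimpleGraph.nRel_starGraph, Fintype.card_fin]
  have hfun : nRel G = fun x : ℝ => x + (k + 2) * x * (1 - x) ^ (k + 2) := by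
    funext x
    rw [hrel]
    push_cast
    ring
  have hsecond (p : ℝ) :
      iteratedDeriv 2 (nRel G) p = (k + 2) ^ 2 * ((k + 3) * p - 2) * (1 - p) ^ k := by
    rw [hfun, iteratedDeriv_two_add_mul_mul_one_sub_pow]
  have hN : (0 : ℝ) < k + 3 := by positivity
  refine ⟨hrel, fun p => ?_, fun p ⟨hp0, hp⟩ => ?_, fun p ⟨hp, hp1⟩ => ?_, ?_⟩
  · rw [hsecond]
    push_cast
    ring
  · rw [Nat.cast_add, Nat.cast_ofNat, lt_div_iff₀ hN] at hp
    rw [hsecond]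
    exact mul_neg_of_neg_of_pos (mul_neg_of_pos_of_neg (by positivity) (by linarith))
      (pow_pos (by nlinarith) k)
  · rw [Nat.cast_add, Nat.cast_ofNat, div_lt_iff₀ hN] at hp
    rw [hsecond]
    exact mul_pos (mul_pos (by positivity) (by linarith)) (pow_pos (by linarith) k)
  · rw [hsecond]
    push_cast
    field_simp
    ring
end

section
/- Let $G$ be a 2-connected graph of order $n$ with minimum vertex cut-set of size $\ell \geq 2$, and let $d_k = (k+1)kc_{k+1} - 2k(n-k)c_k + (n-k+1)(n-k)c_{k-1}$ where $c_k$ is the number of connected sets of order $k$. Then $d_k = 0$ for all $k > n-\ell+1$, and $d_{n-\ell+1} < 0$; consequently $\mathrm{nRel}(G;p)$ is concave down for $p \in (0,1)$ sufficiently close to $1$. -/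
open Finset
open scoped Classical

/-- The `d`-coefficients appearing in the second derivative of the node
reliability polynomial, as integers. -/
noncomputable def dCoeff {V : Type*} [Fintype V] (G : SimpleGraph V) (k : ℕ) : ℤ :=
  ((k:ℤ) + 1) * k * cCount G (k + 1)
    - 2 * k * ((Fintype.card V : ℤ) - k) * cCount G k
    + ((Fintype.card V : ℤ) - k + 1) * ((Fintype.card V : ℤ) - k) * cCount G (k - 1)

lemma choose_id_aux (n k : ℕ) (h : k < n) :
    ((k:ℤ) + 1) * n.choose (k+1) = ((n:ℤ) - k) * n.choose k := by
  have h1 := Nat.choose_succ_right_eq n k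
  zify [h.le] at h1
  linarith

theorem stmt14 {V : Type*} [Fintype V] (G : SimpleGraph V)
    (n : ℕ) (hn : n = Fintype.card V)
    (h2conn : 3 ≤ n ∧ ∀ v : V, (G.induce {u | u ≠ v}).Connected)
    (ℓ : ℕ) (hℓ2 : 2 ≤ ℓ)
    (hcut : ∃ S : Finset V, S.card = ℓ ∧ ({v : V | v ∉ S}).Nonempty ∧
      ¬ (G.induce {v : V | v ∉ S}).Connected)
    (hmin : ∀ S : Finset V, ({v : V | v ∉ S}).Nonempty →
      ¬ (G.induce {v : V | v ∉ S}).Connected → ℓ ≤ S.card) :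
    (∀ k : ℕ, n - ℓ + 1 < k → k ≤ n - 1 → dCoeff G k = 0) ∧
    dCoeff G (n - ℓ + 1) < 0 ∧
    ∃ ε > (0:ℝ), ∀ p ∈ Set.Ioo (1 - ε) (1:ℝ), iteratedDeriv 2 (nRel G) p < 0 := by
  classical
  obtain ⟨h3n, -⟩ := h2conn
  obtain ⟨S, hScard, hSne, hSdisc⟩ := hcut
  have hnV : Fintype.card V = n := hn.symm
  have hsetS : {v : V | v ∉ S} = ((Sᶜ : Finset V) : Set V) := by ext v; simp
  rw [hsetS] at hSdisc
  have hSneq : S ≠ univ := by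
    obtain ⟨v, hv⟩ := hSne
    intro h; exact hv (h ▸ mem_univ v)
  have hℓn : ℓ < n := by
    have := Finset.card_lt_card (Finset.ssubset_univ_iff.mpr hSneq)
    rwa [hScard, Finset.card_univ, hnV] at this
  -- every large vertex subset induces a connected subgraph
  have hconnA : ∀ s : Finset V, n - ℓ < s.card → (G.induce (s : Set V)).Connected := by
    intro s hs
    by_contra h
    have hset : {v : V | v ∉ sᶜ} = (s : Set V) := by ext v; simp
    have hcardpos : 0 < s.card := lt_of_le_of_lt (Nat.zero_le _) hs
    obtain ⟨v, hv⟩ := Finset.card_pos.mp hcardpos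
    have hsne : ({v : V | v ∉ sᶜ} : Set V).Nonempty := ⟨v, by simp [hv]⟩
    have hle := hmin sᶜ hsne (by rw [hset]; exact h)
    rw [Finset.card_compl, hnV] at hle
    have hsn : s.card ≤ n := by rw [hn]; exact Finset.card_le_univ s
    omega
  have hcards : ∀ k : ℕ, (univ.filter (fun s : Finset V => s.card = k)).card = n.choose k := by
    intro k
    rw [← Finset.powerset_univ, ← Finset.powersetCard_eq_filter,
      Finset.card_powersetCard, Finset.card_univ, ← hn]
  have hc : ∀ k, n - ℓ < k → k ≤ n → cCount G k = n.choose k := by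
    intro k h1 _
    unfold cCount
    have heq : (univ.filter (fun s : Finset V =>
        s.card = k ∧ (G.induce (s : Set V)).Connected))
        = univ.filter (fun s : Finset V => s.card = k) := by
      apply Finset.filter_congr
      intro s _
      constructor
      · exact fun h => h.1
      · intro h; exact ⟨h, hconnA s (by omega)⟩
    rw [heq, hcards]
  have hcard0 : (Sᶜ).card = n - ℓ := by rw [Finset.card_compl, hScard, hnV]
  have hclt : cCount G (n - ℓ) < n.choose (n - ℓ) := by
    have hsub : (univ.filter (fun s : Finset V =>
        s.card = n - ℓ ∧ (G.induce (s : Set V)).Connected))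
        ⊆ univ.filter (fun s : Finset V => s.card = n - ℓ) := by
      intro s hs
      simp only [Finset.mem_filter] at hs ⊢
      exact ⟨hs.1, hs.2.1⟩
    have hss : (univ.filter (fun s : Finset V =>
        s.card = n - ℓ ∧ (G.induce (s : Set V)).Connected))
        ⊂ univ.filter (fun s : Finset V => s.card = n - ℓ) := by
      rw [Finset.ssubset_iff_of_subset hsub]
      refine ⟨Sᶜ, by simp [hcard0], ?_⟩
      simp only [Finset.mem_filter]
      intro hmem
      exact hSdisc hmem.2.2
    have := Finset.card_lt_card hss
    rw [hcards] at this
    exact this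
  have part1 : ∀ k : ℕ, n - ℓ + 1 < k → k ≤ n - 1 → dCoeff G k = 0 := by
    intro k hk1 hk2
    have hkn : k < n := by omega
    have e1 := choose_id_aux n k hkn
    have e2 := choose_id_aux n (k-1) (by omega)
    rw [show (k-1)+1 = k from by omega] at e2
    have hcast : ((k-1 : ℕ):ℤ) = (k:ℤ) - 1 := by omega
    rw [hcast] at e2
    have hck1 := hc (k+1) (by omega) (by omega)
    have hck := hc k (by omega) (by omega)
    have hckm := hc (k-1) (by omega) (by omega)
    unfold dCoeff
    rw [hck1, hck, hckm, hnV]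
    linear_combination (k:ℤ) * e1 - ((n:ℤ) - k) * e2
  have part2 : dCoeff G (n - ℓ + 1) < 0 := by
    set m := n - ℓ + 1 with hm
    have hmn : m < n := by omega
    have e1 := choose_id_aux n m hmn
    have e2 := choose_id_aux n (m-1) (by omega)
    rw [show (m-1)+1 = m from by omega] at e2
    have hcast : ((m-1 : ℕ):ℤ) = (m:ℤ) - 1 := by omega
    rw [hcast] at e2
    have hck1 := hc (m+1) (by omega) (by omega)
    have hck := hc m (by omega) (by omega)
    have key : dCoeff G m
        = ((n:ℤ) - m + 1) * ((n:ℤ) - m) * ((cCount G (m-1) : ℤ) - n.choose (m-1)) := by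
      unfold dCoeff
      rw [hck1, hck, hnV]
      linear_combination (m:ℤ) * e1 - ((n:ℤ) - m) * e2
    rw [key]
    have hlt : (cCount G (m-1) : ℤ) - n.choose (m-1) < 0 := by
      have h1 : cCount G (m-1) < n.choose (m-1) := by
        rw [show m - 1 = n - ℓ from by omega]; exact hclt
      omega
    have hpos : 0 < ((n:ℤ) - m + 1) * ((n:ℤ) - m) := by
      have h1 : (0:ℤ) < (n:ℤ) - m := by omega
      have h2 : (0:ℤ) < (n:ℤ) - m + 1 := by omega
      exact mul_pos h2 h1
    exact mul_neg_of_pos_of_neg hpos hlt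
  refine ⟨part1, part2, ?_⟩
  -- Part 3
  obtain ⟨j, hj⟩ : ∃ j, ℓ = j + 2 := ⟨ℓ - 2, by omega⟩
  set A : Finset (Finset V) :=
    univ.filter (fun s : Finset V => ¬ (G.induce (s : Set V)).Connected) with hAdef
  have hAle : ∀ s : Finset V, s ∈ A → s.card ≤ n - ℓ := by
    intro s hs
    rw [hAdef, Finset.mem_filter] at hs
    by_contra hlt
    exact hs.2 (hconnA s (by omega))
  set T : Polynomial ℝ :=
    ∑ s ∈ A, Polynomial.X ^ s.card * (1 - Polynomial.X) ^ (n - s.card - ℓ) with hTdef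
  set R : Polynomial ℝ := 1 - (1 - Polynomial.X) ^ ℓ * T with hRdef
  -- nRel is the evaluation of R
  have hRel : nRel G = fun p => Polynomial.eval p R := by
    funext p
    have hone : ∑ s : Finset V, p ^ s.card * (1-p) ^ (n - s.card) = 1 := by
      have h := Finset.prod_add (fun _ : V => p) (fun _ : V => (1:ℝ) - p) univ
      simp only [Finset.prod_const, Finset.powerset_univ] at h
      have h2 : ∀ s : Finset V, (univ \ s).card = n - s.card := by
        intro s
        rw [Finset.card_sdiff_of_subset (Finset.subset_univ s), Finset.card_univ, hnV]
      calc ∑ s : Finset V, p ^ s.card * (1-p) ^ (n - s.card)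
          = ∑ s : Finset V, p ^ s.card * (1-p) ^ ((univ \ s).card) := by
            apply Finset.sum_congr rfl; intro s _; rw [h2]
        _ = (p + (1 - p)) ^ (univ : Finset V).card := h.symm
        _ = 1 := by simp
    have hsplit : nRel G p = (∑ s : Finset V, p ^ s.card * (1-p) ^ (n - s.card))
        - ∑ s ∈ A, p ^ s.card * (1-p) ^ (n - s.card) := by
      unfold nRel
      rw [hAdef, Finset.sum_filter, ← Finset.sum_sub_distrib]
      apply Finset.sum_congr rfl
      intro s _
      rw [hnV]
      by_cases hcs : (G.induce (s : Set V)).Connected <;> simp [hcs]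
    rw [hsplit, hone, hRdef]
    rw [Polynomial.eval_sub, Polynomial.eval_one, Polynomial.eval_mul,
      Polynomial.eval_pow, Polynomial.eval_sub, Polynomial.eval_one,
      Polynomial.eval_X, hTdef, Polynomial.eval_finset_sum]
    congr 1
    rw [Finset.mul_sum]
    apply Finset.sum_congr rfl
    intro s hs
    rw [Polynomial.eval_mul, Polynomial.eval_pow, Polynomial.eval_pow,
      Polynomial.eval_sub, Polynomial.eval_one, Polynomial.eval_X]
    rw [show (1-p) ^ (n - s.card) = (1-p) ^ (n - s.card - ℓ) * (1-p) ^ ℓ from by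
      rw [← pow_add]; congr 1; have := hAle s hs; omega]
    ring
  have hd2 : ∀ p : ℝ, iteratedDeriv 2 (nRel G) p
      = Polynomial.eval p (Polynomial.derivative (Polynomial.derivative R)) := by
    intro p
    have h0 : iteratedDeriv 2 (nRel G) = deriv (deriv (nRel G)) := by
      rw [show (2:ℕ) = 1 + 1 from rfl, iteratedDeriv_succ, iteratedDeriv_one]
    rw [h0, hRel]
    have h1 : deriv (fun x : ℝ => Polynomial.eval x R)
        = fun x => Polynomial.eval x (Polynomial.derivative R) :=
      funext fun x => Polynomial.deriv R
    rw [h1, Polynomial.deriv]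
  have dmo : Polynomial.derivative (1 - Polynomial.X : Polynomial ℝ) = -1 := by simp
  have dpow : ∀ m : ℕ, Polynomial.derivative ((1 - Polynomial.X : Polynomial ℝ) ^ (m+1))
      = -((((m+1 : ℕ)) : Polynomial ℝ) * (1 - Polynomial.X) ^ m) := by
    intro m
    rw [Polynomial.derivative_pow, dmo, show m + 1 - 1 = m from rfl,
      Polynomial.C_eq_natCast]
    ring
  set U : Polynomial ℝ :=
    ((j : Polynomial ℝ) + 2) * ((j : Polynomial ℝ) + 1) * T
      - (2 * ((j : Polynomial ℝ) + 2)) * ((1 - Polynomial.X) * Polynomial.derivative T)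
      + (1 - Polynomial.X) ^ 2 * Polynomial.derivative (Polynomial.derivative T) with hUdef
  have hfact : Polynomial.derivative (Polynomial.derivative R)
      = -((1 - Polynomial.X) ^ j * U) := by
    have hR2 : R = 1 - (1 - Polynomial.X) ^ ((j+1)+1) * T := by
      rw [hRdef, hj]
    rw [hR2, hUdef]
    simp only [Polynomial.derivative_sub, Polynomial.derivative_one,
      Polynomial.derivative_mul, Polynomial.derivative_add, Polynomial.derivative_neg,
      dpow, Polynomial.derivative_natCast, zero_sub, zero_mul, zero_add, add_zero,
      neg_mul, mul_neg, neg_neg]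
    push_cast
    ring
  have hnotconn := hSdisc
  have hSmem : Sᶜ ∈ A := by
    rw [hAdef, Finset.mem_filter]
    exact ⟨Finset.mem_univ _, hSdisc⟩
  have hT1 : 0 < Polynomial.eval 1 T := by
    rw [hTdef, Polynomial.eval_finset_sum]
    apply Finset.sum_pos'
    · intro s _
      simp only [Polynomial.eval_mul, Polynomial.eval_pow, Polynomial.eval_sub,
        Polynomial.eval_one, Polynomial.eval_X, one_pow, one_mul, sub_self]
      positivity
    · refine ⟨Sᶜ, hSmem, ?_⟩
      simp only [Polynomial.eval_mul, Polynomial.eval_pow, Polynomial.eval_sub,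
        Polynomial.eval_one, Polynomial.eval_X, sub_self, one_pow, one_mul]
      rw [show n - (Sᶜ).card - ℓ = 0 from by rw [hcard0]; omega]
      norm_num
  have hU1 : 0 < Polynomial.eval 1 U := by
    rw [hUdef]
    simp only [Polynomial.eval_add, Polynomial.eval_sub, Polynomial.eval_mul,
      Polynomial.eval_pow, Polynomial.eval_one, Polynomial.eval_X,
      Polynomial.eval_natCast, Polynomial.eval_ofNat, sub_self, mul_zero, zero_mul,
      add_zero, sub_zero]
    norm_num
    have h1 : (0:ℝ) < (j:ℝ) + 2 := by positivity
    have h2 : (0:ℝ) < (j:ℝ) + 1 := by positivity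
    exact mul_pos (mul_pos h1 h2) hT1
  have hopen : IsOpen {x : ℝ | 0 < Polynomial.eval x U} :=
    isOpen_lt continuous_const (Polynomial.continuous U)
  obtain ⟨ε, hε, hball⟩ := Metric.isOpen_iff.mp hopen 1 hU1
  refine ⟨ε, hε, ?_⟩
  intro p hp
  rw [hd2 p, hfact]
  simp only [Polynomial.eval_neg, Polynomial.eval_mul, Polynomial.eval_pow,
    Polynomial.eval_sub, Polynomial.eval_one, Polynomial.eval_X]
  have h1p : 0 < 1 - p := by have := hp.2; linarith
  have hpb : p ∈ Metric.ball (1:ℝ) ε := by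
    rw [Metric.mem_ball, Real.dist_eq, abs_sub_lt_iff]
    constructor
    · have := hp.2; linarith
    · have := hp.1; linarith
  have hUp : 0 < Polynomial.eval p U := hball hpb
  have hfin : 0 < (1-p)^j * Polynomial.eval p U := mul_pos (pow_pos h1p j) hUp
  linarith
end

section
/- If $G$ is a connected graph on $n$ vertices with at least 2 cut vertices, then there exists $p \in (0,1)$ with $\mathrm{nRel}(G;p) = p$; that is, the node reliability polynomial has a fixed point in $(0,1)$. -/
open Finset
open scoped Classical

/-- The number of cut vertices of `G`: vertices whose removal disconnects the graph. -/
noncomputable def cutVertexCount {V : Type*} [Fintype V] (G : SimpleGraph V) : ℕ :=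
  (Finset.univ.filter (fun v : V => ¬ (G.induce {u | u ≠ v}).Connected)).card

/-!
Write `f = nRel G` for a graph with `n` vertices and `t` cut vertices, so `f 0 = 0` and
`f 1 = 1`. Expanding `f` over the connected vertex sets `s` as `∑ p ^ |s| (1 - p) ^ (n - |s|)`,
only the singletons contribute to `f' 0`, giving `n`, and only the sets of size `n` and `n - 1`
contribute to `f' 1`; the latter are the complements of the non-cut vertices, giving
`f' 1 = n - (n - t) = t`. Since both slopes exceed `1`, `f p - p` is positive just right of `0`
and negative just left of `1`, and the intermediate value theorem gives a fixed point in between.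
-/

lemma exists_mem_Ioo_eq_zero_of_hasDerivAt_pos {f : ℝ → ℝ} {a b f'a f'b : ℝ} (hab : a < b)
    (hf : ContinuousOn f (Set.Icc a b)) (ha : f a = 0) (hb : f b = 0)
    (hfa : HasDerivAt f f'a a) (hfb : HasDerivAt f f'b b) (hf'a : 0 < f'a) (hf'b : 0 < f'b) :
    ∃ c ∈ Set.Ioo a b, f c = 0 := by
  obtain ⟨x, hxs, hx⟩ : ∃ x, 0 < slope f a x ∧ x ∈ Set.Ioo a b :=
    (((hasDerivAt_iff_tendsto_slope.mp hfa).eventually (eventually_gt_nhds hf'a)).filter_mono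
      (nhdsGT_le_nhdsNE a) |>.and (Ioo_mem_nhdsGT hab)).exists
  obtain ⟨y, hys, hy⟩ : ∃ y, 0 < slope f b y ∧ y ∈ Set.Ioo x b :=
    (((hasDerivAt_iff_tendsto_slope.mp hfb).eventually (eventually_gt_nhds hf'b)).filter_mono
      (nhdsLT_le_nhdsNE b) |>.and (Ioo_mem_nhdsLT hx.2)).exists
  have hfx : 0 < f x := pos_of_slope_pos hx.1 hxs ha
  have hfy : f y < 0 := neg_of_slope_pos hy.2 hys hb
  obtain ⟨c, hc, hfc⟩ := intermediate_value_Ioo' hy.1.le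
    (hf.mono (Set.Icc_subset_Icc hx.1.le hy.2.le)) ⟨hfy, hfx⟩
  exact ⟨c, ⟨hx.1.trans hc.1, hc.2.trans hy.2⟩, hfc⟩

/-- The probability that a random subset of `V`, containing each element independently with
probability `p`, belongs to the family `𝒮`. -/
noncomputable def probMem {V : Type*} [Fintype V] (𝒮 : Finset (Finset V)) (p : ℝ) : ℝ :=
  ∑ s ∈ 𝒮, p ^ #s * (1 - p) ^ (Fintype.card V - #s)

lemma hasDerivAt_pow_mul_one_sub_pow (k m : ℕ) (x : ℝ) :
    HasDerivAt (fun p : ℝ => p ^ k * (1 - p) ^ m)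
      (k * x ^ (k - 1) * (1 - x) ^ m - m * x ^ k * (1 - x) ^ (m - 1)) x :=
  ((hasDerivAt_pow k x).fun_mul (((hasDerivAt_id' x).const_sub 1).fun_pow m)).congr_deriv
    (by ring)

section probMem

variable {V : Type*} [Fintype V] {𝒮 : Finset (Finset V)}

lemma continuous_probMem (𝒮 : Finset (Finset V)) : Continuous (probMem 𝒮) := by
  unfold probMem
  fun_prop

lemma probMem_zero (h𝒮 : ∅ ∉ 𝒮) : probMem 𝒮 0 = 0 := by
  refine sum_eq_zero fun s hs => ?_
  have : #s ≠ 0 := card_ne_zero.mpr (nonempty_iff_ne_empty.mpr (ne_of_mem_of_not_mem hs h𝒮))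
  simp [this]

lemma probMem_one (h𝒮 : univ ∈ 𝒮) : probMem 𝒮 1 = 1 := by
  rw [probMem, sum_eq_single_of_mem univ h𝒮]
  · simp
  · intro s _ hs
    simp [Nat.sub_ne_zero_of_lt ((card_lt_iff_ne_univ s).mpr hs)]

lemma hasDerivAt_probMem (𝒮 : Finset (Finset V)) (x : ℝ) :
    HasDerivAt (probMem 𝒮) (∑ s ∈ 𝒮, (#s * x ^ (#s - 1) * (1 - x) ^ (Fintype.card V - #s)
      - (Fintype.card V - #s : ℕ) * x ^ #s * (1 - x) ^ (Fintype.card V - #s - 1))) x :=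
  HasDerivAt.fun_sum fun s _ => hasDerivAt_pow_mul_one_sub_pow #s (Fintype.card V - #s) x

lemma hasDerivAt_probMem_zero (h𝒮 : ∅ ∉ 𝒮) :
    HasDerivAt (probMem 𝒮) #{s ∈ 𝒮 | #s = 1} 0 := by
  convert hasDerivAt_probMem 𝒮 0 using 1
  rw [← sum_boole]
  refine sum_congr rfl fun s hs => ?_
  have hs0 : #s ≠ 0 :=
    card_ne_zero.mpr (nonempty_iff_ne_empty.mpr (ne_of_mem_of_not_mem hs h𝒮))
  by_cases hs1 : #s = 1
  · simp [hs1]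
  · simp [hs1, hs0, Nat.sub_ne_zero_of_lt (by omega : 1 < #s)]

lemma hasDerivAt_probMem_one (h𝒮 : univ ∈ 𝒮) :
    HasDerivAt (probMem 𝒮) (Fintype.card V - #{s ∈ 𝒮 | #s + 1 = Fintype.card V}) 1 := by
  convert hasDerivAt_probMem 𝒮 1 using 1
  rw [← sum_boole, ← sum_ite_eq_of_mem' 𝒮 univ (fun _ => (Fintype.card V : ℝ)) h𝒮,
    ← sum_sub_distrib]
  refine sum_congr rfl fun s hs => ?_
  by_cases hsu : s = univ
  · subst hsu
    simp
  · have hlt : #s < Fintype.card V := (card_lt_iff_ne_univ s).mpr hsu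
    by_cases hs1 : #s + 1 = Fintype.card V
    · simp [hsu, hs1, show Fintype.card V - #s = 1 by omega]
    · simp [hsu, hs1, Nat.sub_ne_zero_of_lt hlt, show Fintype.card V - #s - 1 ≠ 0 by omega]

end probMem

section connectedSets

variable {V : Type*} [Fintype V] (G : SimpleGraph V)

noncomputable def connectedSets : Finset (Finset V) :=
  {s | (G.induce (s : Set V)).Connected}

lemma nRel_eq_probMem : nRel G = probMem (connectedSets G) := by
  funext p
  simp [nRel, probMem, connectedSets, sum_filter]

lemma empty_notMem_connectedSets : ∅ ∉ connectedSets G := by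
  simp [connectedSets, SimpleGraph.connected_iff]

lemma univ_mem_connectedSets (hG : G.Connected) : univ ∈ connectedSets G := by
  rw [connectedSets, mem_filter, coe_univ]
  exact ⟨mem_univ _, (SimpleGraph.induceUnivIso G).connected_iff.mpr hG⟩

lemma card_connectedSets_card_eq_one : #{s ∈ connectedSets G | #s = 1} = Fintype.card V := by
  have : {s ∈ connectedSets G | #s = 1} = powersetCard 1 univ := by
    ext s
    simp only [connectedSets, mem_filter, mem_univ, true_and, mem_powersetCard, subset_univ,
      and_iff_right_iff_imp]
    intro hs
    obtain ⟨v, rfl⟩ := card_eq_one.mp hs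
    rw [coe_singleton, SimpleGraph.induce_singleton_eq_top]
    exact SimpleGraph.connected_top
  simp [this]

lemma coe_compl_singleton (v : V) : ((({v} : Finset V)ᶜ : Finset V) : Set V) = {u | u ≠ v} := by
  rw [coe_compl, coe_singleton, Set.compl_singleton_eq]

/-- The connected sets of size `n - 1` are the complements of the non-cut vertices. -/
lemma card_connectedSets_card_add_one_eq :
    #{s ∈ connectedSets G | #s + 1 = Fintype.card V} + cutVertexCount G = Fintype.card V := by
  have : {s ∈ connectedSets G | #s + 1 = Fintype.card V}
      = image (fun v => {v}ᶜ) {v | (G.induce {u | u ≠ v}).Connected} := by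
    ext s
    simp only [connectedSets, mem_filter, mem_univ, true_and, mem_image]
    constructor
    · rintro ⟨hs, hcard⟩
      obtain ⟨v, hv⟩ := card_eq_one.mp (show #sᶜ = 1 by rw [card_compl]; omega)
      obtain rfl : s = {v}ᶜ := by rw [← hv, compl_compl]
      exact ⟨v, by rwa [← coe_compl_singleton], rfl⟩
    · rintro ⟨v, hv, rfl⟩
      refine ⟨by rwa [coe_compl_singleton], ?_⟩
      rw [card_compl, card_singleton]
      have := Fintype.card_pos_iff.mpr ⟨v⟩
      omega
  rw [this, card_image_of_injective _ fun v w h => singleton_injective (compl_injective h),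
    cutVertexCount, card_filter_add_card_filter_not, card_univ]

lemma continuous_nRel : Continuous (nRel G) := by
  rw [nRel_eq_probMem]
  exact continuous_probMem _

lemma nRel_zero : nRel G 0 = 0 := by
  rw [nRel_eq_probMem, probMem_zero (empty_notMem_connectedSets G)]

lemma nRel_one (hG : G.Connected) : nRel G 1 = 1 := by
  rw [nRel_eq_probMem, probMem_one (univ_mem_connectedSets G hG)]

lemma hasDerivAt_nRel_zero : HasDerivAt (nRel G) (Fintype.card V) 0 := by
  rw [nRel_eq_probMem, ← card_connectedSets_card_eq_one G]
  exact hasDerivAt_probMem_zero (empty_notMem_connectedSets G)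

lemma hasDerivAt_nRel_one (hG : G.Connected) : HasDerivAt (nRel G) (cutVertexCount G) 1 := by
  have hcut : (cutVertexCount G : ℝ)
      = Fintype.card V - #{s ∈ connectedSets G | #s + 1 = Fintype.card V} := by
    rw [eq_sub_iff_add_eq']
    exact_mod_cast card_connectedSets_card_add_one_eq G
  rw [nRel_eq_probMem, hcut]
  exact hasDerivAt_probMem_one (univ_mem_connectedSets G hG)

end connectedSets

theorem stmt16 {V : Type*} [Fintype V] (G : SimpleGraph V) (hG : G.Connected)
    (ht : 2 ≤ cutVertexCount G) :
    ∃ p ∈ Set.Ioo (0:ℝ) 1, nRel G p = p := by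
  have hcut_le : cutVertexCount G ≤ Fintype.card V := card_filter_le _ _
  obtain ⟨p, hp, hfix⟩ := exists_mem_Ioo_eq_zero_of_hasDerivAt_pos zero_lt_one
    ((continuous_nRel G).sub continuous_id).continuousOn
    (by simp [nRel_zero]) (by simp [nRel_one G hG])
    ((hasDerivAt_nRel_zero G).sub (hasDerivAt_id 0))
    ((hasDerivAt_nRel_one G hG).sub (hasDerivAt_id 1))
    (by rw [sub_pos, Nat.one_lt_cast]; omega) (by rw [sub_pos, Nat.one_lt_cast]; omega)
  exact ⟨p, hp, sub_eq_zero.mp hfix⟩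
end

section
/- For every $n \geq 2$, the node reliability of the graph $K_{n-1} \circ K_2$ (complete graph $K_{n-1}$ with a pendant vertex attached) equals $1 - p(1-p) + p(1-p)^{n-1} - (1-p)^n$, its derivative equals $2p - 1 + (1-p)^{n-2}(n - 2np + 1)$, and for all $n \geq 7$ this derivative is negative at $p = 2/5$, so $\mathrm{nRel}(K_{n-1}\circ K_2;p)$ is decreasing at $p = 2/5$. -/
open Finset
open scoped Classical

/-- If some hub `h ∈ s` is adjacent to every other vertex of `s`, the induced graph is
connected. -/
lemma hub_connected {V : Type*} (G : SimpleGraph V) (s : Finset V) (h : V) (hh : h ∈ s)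
    (hadj : ∀ v ∈ s, v = h ∨ G.Adj v h) : (G.induce (s : Set V)).Connected := by
  rw [SimpleGraph.connected_iff]
  have key : ∀ u : (s : Set V), (G.induce (s : Set V)).Reachable u ⟨h, hh⟩ := by
    intro u
    rcases hadj u.1 u.2 with h1 | h1
    · have : u = (⟨h, hh⟩ : (s : Set V)) := Subtype.ext h1
      rw [this]
    · exact SimpleGraph.Adj.reachable (by exact h1)
  exact ⟨fun u v => (key u).trans (key v).symm, ⟨⟨h, hh⟩⟩⟩

/-- If `x ∈ s` has no neighbours inside `s` and `s` contains another vertex, the induced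
graph is not connected. -/
lemma not_connected_of_isolated {V : Type*} (G : SimpleGraph V) (s : Finset V) (x y : V)
    (hx : x ∈ s) (hy : y ∈ s) (hxy : x ≠ y) (hiso : ∀ v ∈ s, ¬ G.Adj x v) :
    ¬ (G.induce (s : Set V)).Connected := by
  intro hc
  have key : ∀ (v : (s : Set V)) (w : (G.induce (s : Set V)).Walk ⟨x, hx⟩ v),
      v = (⟨x, hx⟩ : (s : Set V)) := by
    intro v w
    cases w with
    | nil => rfl
    | cons hadj p =>
      exact absurd (by exact hadj) (hiso _ (by exact_mod_cast (Subtype.mem _)))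
  obtain ⟨w⟩ := hc.preconnected ⟨x, hx⟩ ⟨y, hy⟩
  have hk := key ⟨y, hy⟩ w
  simp only [Subtype.mk.injEq] at hk
  exact hxy hk.symm

lemma sum_pow_powerset' {V : Type*} [DecidableEq V] (t : Finset V) (p q : ℝ) :
    ∑ s ∈ t.powerset, p ^ s.card * q ^ (t.card - s.card) = (p + q) ^ t.card := by
  have h := Finset.prod_add (fun _ : V => p) (fun _ : V => q) t
  simp only [Finset.prod_const] at h
  rw [h]
  exact Finset.sum_congr rfl fun s hs => by
    rw [Finset.card_sdiff_of_subset (Finset.mem_powerset.mp hs)]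

set_option linter.unusedTactic false in
lemma aux3 : ∀ m : ℕ, 7 ≤ m → (3/5 : ℝ) ^ (m - 2) * ((m : ℝ) + 5) < 1 := by
  intro m hm
  induction m, hm using Nat.le_induction with
  | base => norm_num
  | succ k hk ih =>
    have hke : k + 1 - 2 = (k - 2) + 1 := by omega
    have hpos : (0:ℝ) ≤ (3/5 : ℝ) ^ (k - 2) := by positivity
    push_cast
    have h1 : (3/5 : ℝ) ^ (k + 1 - 2) * ((k : ℝ) + 1 + 5)
        = (3/5 : ℝ) ^ (k - 2) * ((3/5) * ((k : ℝ) + 6)) := by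
      rw [hke, pow_succ]; push_cast; ring
    have h2 : (3/5 : ℝ) * ((k : ℝ) + 6) ≤ (k : ℝ) + 5 := by
      have : (7:ℝ) ≤ (k : ℝ) := by exact_mod_cast hk
      linarith
    calc (3/5 : ℝ) ^ (k + 1 - 2) * ((k : ℝ) + 1 + 5)
        = (3/5 : ℝ) ^ (k - 2) * ((3/5) * ((k : ℝ) + 6)) := h1
      _ ≤ (3/5 : ℝ) ^ (k - 2) * ((k : ℝ) + 5) := by
          exact mul_le_mul_of_nonneg_left h2 hpos
      _ < 1 := ih

theorem stmt18 (n : ℕ) (hn : 2 ≤ n) (G : SimpleGraph (Fin n))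
    (hG : ∀ u v, G.Adj u v ↔ u ≠ v ∧
      ((u.val < n - 1 ∧ v.val < n - 1) ∨ (u.val = 0 ∧ v.val = n - 1) ∨
        (u.val = n - 1 ∧ v.val = 0))) :
    (∀ p : ℝ, nRel G p = 1 - p * (1 - p) + p * (1 - p) ^ (n - 1) - (1 - p) ^ n) ∧
    (∀ p : ℝ, deriv (nRel G) p =
      2 * p - 1 + (1 - p) ^ (n - 2) * ((n:ℝ) - 2 * n * p + 1)) ∧
    (7 ≤ n → deriv (nRel G) (2 / 5) < 0) := by
  have hn0 : 0 < n := by omega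
  set a : Fin n := ⟨n - 1, by omega⟩ with ha
  set z : Fin n := ⟨0, by omega⟩ with hz
  have haval : a.val = n - 1 := rfl
  have hzval : z.val = 0 := rfl
  have haz : a ≠ z := by
    simp only [Fin.ne_iff_vne, haval, hzval]
    omega
  -- classification of connected induced subgraphs
  have hclass : ∀ s : Finset (Fin n), (G.induce (s : Set (Fin n))).Connected ↔
      ((a ∉ s ∧ s.Nonempty) ∨ s = {a} ∨ (a ∈ s ∧ z ∈ s)) := by
    intro s
    constructor
    · intro hc
      by_cases hA : a ∈ s
      · by_cases hZ : z ∈ s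
        · exact Or.inr (Or.inr ⟨hA, hZ⟩)
        · refine Or.inr (Or.inl ?_)
          by_contra hne
          obtain ⟨y, hy, hya⟩ : ∃ y ∈ s, y ≠ a := by
            by_contra hcon
            push_neg at hcon
            exact hne (Finset.eq_singleton_iff_unique_mem.mpr ⟨hA, hcon⟩)
          refine not_connected_of_isolated G s a y hA hy (Ne.symm hya) ?_ hc
          intro v hv hadj
          rw [hG] at hadj
          obtain ⟨hne', hcase⟩ := hadj
          rcases hcase with ⟨h1, _⟩ | ⟨h1, _⟩ | ⟨_, h2⟩
          · rw [haval] at h1; omega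
          · rw [haval] at h1; omega
          · exact hZ (by rwa [show v = z from Fin.ext (by rw [h2, hzval])] at hv)
      · refine Or.inl ⟨hA, ?_⟩
        obtain ⟨v⟩ := hc.nonempty
        exact ⟨v.1, v.2⟩
    · rintro (⟨hA, ⟨m, hm⟩⟩ | rfl | ⟨hA, hZ⟩)
      · -- clique on the core
        apply hub_connected G s m hm
        intro v hv
        by_cases hvm : v = m
        · exact Or.inl hvm
        · refine Or.inr ((hG v m).mpr ⟨hvm, Or.inl ⟨?_, ?_⟩⟩)
          · have hva : v ≠ a := fun h => hA (h ▸ hv)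
            have : v.val ≠ n - 1 := fun h => hva (Fin.ext (by rw [h, haval]))
            have := v.isLt; omega
          · have hma : m ≠ a := fun h => hA (h ▸ hm)
            have : m.val ≠ n - 1 := fun h => hma (Fin.ext (by rw [h, haval]))
            have := m.isLt; omega
      · exact hub_connected G {a} a (Finset.mem_singleton_self a)
          (fun v hv => Or.inl (Finset.mem_singleton.mp hv))
      · apply hub_connected G s z hZ
        intro v hv
        by_cases hvz : v = z
        · exact Or.inl hvz
        · refine Or.inr ((hG v z).mpr ⟨hvz, ?_⟩)
          by_cases hva : v = a
          · exact Or.inr (Or.inr ⟨by rw [hva, haval], hzval⟩)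
          · refine Or.inl ⟨?_, ?_⟩
            · have : v.val ≠ n - 1 := fun h => hva (Fin.ext (by rw [h, haval]))
              have := v.isLt; omega
            · rw [hzval]; omega
  -- the main polynomial identity
  have key : ∀ p : ℝ, nRel G p = 1 - p * (1 - p) + p * (1 - p) ^ (n - 1) - (1 - p) ^ n := by
    intro p
    unfold nRel
    simp only [Fintype.card_fin]
    have split : ∀ s : Finset (Fin n),
        (if (G.induce (s : Set (Fin n))).Connected
          then p ^ s.card * (1 - p) ^ (n - s.card) else 0)
        = (if a ∉ s ∧ s.Nonempty then p ^ s.card * (1 - p) ^ (n - s.card) else 0)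
          + (if s = {a} then p ^ s.card * (1 - p) ^ (n - s.card) else 0)
          + (if a ∈ s ∧ z ∈ s then p ^ s.card * (1 - p) ^ (n - s.card) else 0) := by
      intro s
      rw [if_congr (hclass s) rfl rfl]
      by_cases h1 : a ∈ s
      · by_cases h2 : z ∈ s
        · have h3 : s ≠ {a} := fun h =>
            haz (Finset.mem_singleton.mp (h ▸ h2)).symm
          simp [h1, h2, h3]
        · by_cases h3 : s = {a}
          · simp [h1, h2, h3, Ne.symm haz]
          · simp [h1, h2, h3]
      · have h3 : s ≠ {a} := fun h => h1 (h ▸ Finset.mem_singleton_self a)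
        simp [h1, h3]
    rw [Finset.sum_congr rfl (fun s _ => split s), Finset.sum_add_distrib,
      Finset.sum_add_distrib]
    -- second summand
    have e2 : (∑ s : Finset (Fin n),
        if s = {a} then p ^ s.card * (1 - p) ^ (n - s.card) else 0)
        = p * (1 - p) ^ (n - 1) := by
      rw [Finset.sum_ite_eq' Finset.univ ({a} : Finset (Fin n))
        (fun s => p ^ s.card * (1 - p) ^ (n - s.card))]
      simp
    -- first summand
    have e1 : (∑ s : Finset (Fin n),
        if a ∉ s ∧ s.Nonempty then p ^ s.card * (1 - p) ^ (n - s.card) else 0)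
        = (1 - p) - (1 - p) ^ n := by
      rw [← Finset.sum_filter]
      have hset : Finset.univ.filter (fun s : Finset (Fin n) => a ∉ s ∧ s.Nonempty)
          = (({a} : Finset (Fin n))ᶜ).powerset.erase ∅ := by
        ext s
        simp [Finset.mem_powerset, Finset.subset_compl_singleton,
          Finset.nonempty_iff_ne_empty, and_comm]
      rw [hset, Finset.sum_erase_eq_sub (Finset.empty_mem_powerset _)]
      have hc : (({a} : Finset (Fin n))ᶜ).card = n - 1 := by
        simp [Finset.card_compl]
      have hstep : ∑ s ∈ (({a} : Finset (Fin n))ᶜ).powerset,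
          p ^ s.card * (1 - p) ^ (n - s.card)
          = (1 - p) * ∑ s ∈ (({a} : Finset (Fin n))ᶜ).powerset,
            p ^ s.card * (1 - p) ^ ((n - 1) - s.card) := by
        rw [Finset.mul_sum]
        refine Finset.sum_congr rfl fun s hs => ?_
        have hle : s.card ≤ n - 1 := hc ▸ Finset.card_le_card (Finset.mem_powerset.mp hs)
        have hEq : n - s.card = ((n - 1) - s.card) + 1 := by omega
        rw [hEq, pow_succ]; ring
      have hps := sum_pow_powerset' (({a} : Finset (Fin n))ᶜ) p (1 - p)
      rw [hc] at hps
      rw [hstep, hps]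
      norm_num
    -- third summand
    have e3 : (∑ s : Finset (Fin n),
        if a ∈ s ∧ z ∈ s then p ^ s.card * (1 - p) ^ (n - s.card) else 0)
        = p ^ 2 := by
      rw [← Finset.sum_filter]
      have hbij : (∑ s ∈ Finset.univ.filter (fun s : Finset (Fin n) => a ∈ s ∧ z ∈ s),
          p ^ s.card * (1 - p) ^ (n - s.card))
          = ∑ U ∈ (({a, z} : Finset (Fin n))ᶜ).powerset,
            p ^ (U ∪ {a, z}).card * (1 - p) ^ (n - (U ∪ {a, z}).card) := by
        refine Finset.sum_bij' (fun s _ => s \ ({a, z} : Finset (Fin n)))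
          (fun U _ => U ∪ ({a, z} : Finset (Fin n))) ?_ ?_ ?_ ?_ ?_
        · intro s hs
          rw [Finset.mem_powerset]
          intro x hx
          rw [Finset.mem_sdiff] at hx
          simp only [Finset.mem_compl]
          exact hx.2
        · intro U hU
          simp only [Finset.mem_filter, Finset.mem_univ, true_and]
          constructor
          · exact Finset.mem_union_right _ (by simp)
          · exact Finset.mem_union_right _ (by simp)
        · intro s hs
          simp only [Finset.mem_filter, Finset.mem_univ, true_and] at hs
          ext x
          simp only [Finset.mem_union, Finset.mem_sdiff, Finset.mem_insert,
            Finset.mem_singleton]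
          constructor
          · rintro (⟨hx, -⟩ | h | h)
            · exact hx
            · exact h ▸ hs.1
            · exact h ▸ hs.2
          · intro hx
            by_cases hc : x = a ∨ x = z
            · exact Or.inr hc
            · exact Or.inl ⟨hx, by push_neg at hc; simp [hc.1, hc.2]⟩
        · intro U hU
          rw [Finset.mem_powerset] at hU
          exact Finset.union_sdiff_cancel_right
            (Finset.disjoint_left.mpr fun x hx => Finset.mem_compl.mp (hU hx))
        · intro s hs
          simp only [Finset.mem_filter, Finset.mem_univ, true_and] at hs
          have : (s \ ({a, z} : Finset (Fin n))) ∪ ({a, z} : Finset (Fin n)) = s := by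
            ext x
            simp only [Finset.mem_union, Finset.mem_sdiff, Finset.mem_insert,
              Finset.mem_singleton]
            constructor
            · rintro (⟨hx, -⟩ | h | h)
              · exact hx
              · exact h ▸ hs.1
              · exact h ▸ hs.2
            · intro hx
              by_cases hc : x = a ∨ x = z
              · exact Or.inr hc
              · exact Or.inl ⟨hx, by push_neg at hc; simp [hc.1, hc.2]⟩
          rw [this]
      rw [hbij]
      have hc2 : (({a, z} : Finset (Fin n))ᶜ).card = n - 2 := by
        rw [Finset.card_compl, Finset.card_pair haz, Fintype.card_fin]
      have hbody : ∀ U ∈ (({a, z} : Finset (Fin n))ᶜ).powerset,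
          p ^ (U ∪ {a, z}).card * (1 - p) ^ (n - (U ∪ {a, z}).card)
          = p ^ 2 * (p ^ U.card * (1 - p) ^ ((n - 2) - U.card)) := by
        intro U hU
        rw [Finset.mem_powerset] at hU
        have hdisj : Disjoint U ({a, z} : Finset (Fin n)) :=
          Finset.disjoint_left.mpr fun x hx => Finset.mem_compl.mp (hU hx)
        rw [Finset.card_union_of_disjoint hdisj, Finset.card_pair haz]
        have h1 : n - (U.card + 2) = (n - 2) - U.card := by omega
        rw [h1, pow_add]
        ring
      rw [Finset.sum_congr rfl hbody, ← Finset.mul_sum]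
      have hps := sum_pow_powerset' (({a, z} : Finset (Fin n))ᶜ) p (1 - p)
      rw [hc2] at hps
      rw [hps]
      norm_num
    rw [e1, e2, e3]
    ring
  have hD : ∀ p : ℝ, deriv (nRel G) p =
      2 * p - 1 + (1 - p) ^ (n - 2) * ((n:ℝ) - 2 * n * p + 1) := by
    have hfun : nRel G = fun x : ℝ =>
        1 - x * (1 - x) + x * (1 - x) ^ (n - 1) - (1 - x) ^ n := funext key
    intro p
    rw [hfun]
    have h1 : HasDerivAt (fun x : ℝ => 1 - x) (-1) p := by
      simpa using (hasDerivAt_id p).const_sub 1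
    have H : HasDerivAt (fun x : ℝ =>
        1 - x * (1 - x) + x * (1 - x) ^ (n - 1) - (1 - x) ^ n)
        ((0 - (1 * (1 - p) + p * (-1)))
          + (1 * (1 - p) ^ (n - 1) + p * ((↑(n-1) : ℝ) * (1 - p) ^ (n - 1 - 1) * (-1)))
          - ((n : ℝ) * (1 - p) ^ (n - 1) * (-1))) p := by
      exact (((hasDerivAt_const p (1:ℝ)).sub ((hasDerivAt_id p).mul h1)).add
        ((hasDerivAt_id p).mul (h1.pow (n-1)))).sub (h1.pow n)
    rw [H.deriv]
    have e1 : n - 1 - 1 = n - 2 := by omega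
    have e2 : n - 1 = (n - 2) + 1 := by omega
    have e3 : ((n - 1 : ℕ) : ℝ) = (n : ℝ) - 1 := by
      have h1n : (1:ℕ) ≤ n := by omega
      push_cast [Nat.cast_sub h1n]; ring
    rw [e1, e3, e2, pow_succ]
    ring
  refine ⟨key, hD, ?_⟩
  intro h7
  rw [hD (2/5)]
  have hval : (1 - (2:ℝ)/5) = 3/5 := by norm_num
  have hexp : (n:ℝ) - 2 * n * (2/5) + 1 = ((n:ℝ) + 5) / 5 := by ring
  rw [hval, hexp]
  have := aux3 n h7
  have hpos : (0:ℝ) < 5 := by norm_num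
  nlinarith [this]
end
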